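/- arXiv:2512.21274 — 3 statements merged into one kernel-verified Lean document; each statement's English description precedes it below -/
import Mathlib

section
/- Let n ≥ 3. If X : ℝ^n ∖ {0} → ℝ^n is smooth, positively homogeneous of degree 0, and satisfies P̄X = 0 on ℝ^n ∖ {0}, then X is divergence-free: Σ_b ∂_b X_b = 0 on ℝ^n ∖ {0}. -/
open MeasureTheory Finset
open scoped ENNReal

noncomputable section

abbrev Euc (n : ℕ) : Type := EuclideanSpace ℝ (Fin n)

variable {n : ℕ}

/-- Partial derivative in coordinate direction `i`. -/
def pd (i : Fin n) (f : Euc n → ℝ) : Euc n → ℝ :=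
  fun x => fderiv ℝ f x (EuclideanSpace.single i 1)

/-- Iterated partial derivative along a list of coordinate directions. -/
def pdList : List (Fin n) → (Euc n → ℝ) → Euc n → ℝ
  | [], f => f
  | i :: L, f => pd i (pdList L f)

/-- The canonical list of coordinate directions associated to a multi-index. -/
def mlist (α : Fin n → ℕ) : List (Fin n) :=
  ((List.finRange n).map fun i => List.replicate (α i) i).flatten

/-- Multi-index partial derivative `∂_α`. -/
def mderiv (α : Fin n → ℕ) (f : Euc n → ℝ) : Euc n → ℝ :=
  pdList (mlist α) f

/-- The Euclidean Laplacian. -/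
def lap (f : Euc n → ℝ) : Euc n → ℝ :=
  fun x => ∑ i, pd i (pd i f) x

/-- The Euclidean conformal Killing operator `(𝕃 W)_{a b}`. -/
def cko (W : Euc n → Euc n) (a b : Fin n) : Euc n → ℝ :=
  fun x => pd a (fun y => W y b) x + pd b (fun y => W y a) x
    - (if a = b then 2 / (n : ℝ) else 0) * ∑ c, pd c (fun y => W y c) x

/-- The Euclidean vector Laplacian `(P̄ W)_a = ½ Σ_b ∂_b (𝕃W)_{a b}`. -/
def vecLap (W : Euc n → Euc n) : Euc n → Euc n :=
  fun x => (EuclideanSpace.equiv (Fin n) ℝ).symm fun a => (1 / 2) * ∑ b, pd b (cko W a b) x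

/-- `f` is positively homogeneous of degree `d`: `f (t • x) = t ^ d • f x` for `t > 0`, `x ≠ 0`. -/
def PosHomog {F : Type*} [SMul ℝ F] (d : ℝ) (f : Euc n → F) : Prop :=
  ∀ t : ℝ, 0 < t → ∀ x : Euc n, x ≠ 0 → f (t • x) = t ^ d • f x

/-- The surface measure on the unit sphere `S^{n-1} ⊆ ℝ^n`
((n-1)-dimensional Hausdorff measure restricted to the sphere). -/
def sphMeas (n : ℕ) : Measure (Euc n) :=
  (μH[(n : ℝ) - 1]).restrict (Metric.sphere (0 : Euc n) 1)

/-- `|S^{n-1}|`, the total surface measure of the unit sphere. -/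
def sphVol (n : ℕ) : ℝ := (sphMeas n Set.univ).toReal

/-- The constant `C_n = 1 / (4 (n-1) (n-2) |S^{n-1}|)`. -/
def Cconst (n : ℕ) : ℝ := 1 / (4 * ((n : ℝ) - 1) * ((n : ℝ) - 2) * sphVol n)

/-- The Green's function `G^{ab}` of the Euclidean vector Laplacian. -/
def GreenFn (n : ℕ) (a b : Fin n) (x : Euc n) : ℝ :=
  -2 * Cconst n * ‖x‖ ^ ((2 : ℝ) - n) *
    ((3 * (n : ℝ) - 2) * (if a = b then 1 else 0)
      + ((n : ℝ) - 2) ^ 2 * (x a / ‖x‖) * (x b / ‖x‖))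

/-- The `j`-th column `G_{(j)}` of the Green's function. -/
def GreenCol (n : ℕ) (j : Fin n) : Euc n → Euc n :=
  fun x => (EuclideanSpace.equiv (Fin n) ℝ).symm fun a => GreenFn n a j x

/-- The Japanese-bracket weight `⟨x⟩^{-n - p δ}`. -/
def jweight (n : ℕ) (p δ : ℝ) (x : Euc n) : ℝ :=
  (1 + ‖x‖ ^ 2) ^ ((-(n : ℝ) - p * δ) / 2)

/-- The finite set of multi-indices of total degree at most `k`. -/
def midx (n k : ℕ) : Finset (Fin n → Fin (k + 1)) :=
  Finset.univ.filter fun α => ∑ i, (α i : ℕ) ≤ k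

/-- The `p`-th power of the weighted Sobolev norm `‖f‖_{W^{k,p}_δ}`, with the integrals
taken over the set `s`. -/
def wnormPOn (p δ : ℝ) (k : ℕ) (f : Euc n → ℝ) (s : Set (Euc n)) : ℝ≥0∞ :=
  ∑ α ∈ midx n k,
    ∫⁻ x in s, ENNReal.ofReal (jweight n p δ x * |mderiv (fun i => (α i : ℕ)) f x| ^ p)

/-- The `p`-th power of the weighted Sobolev norm `‖f‖_{W^{k,p}_δ}`. -/
def wnormP (p δ : ℝ) (k : ℕ) (f : Euc n → ℝ) : ℝ≥0∞ := wnormPOn p δ k f Set.univ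

/-- The weighted Sobolev norm `‖f‖_{W^{k,p}_δ}` of a scalar function, valued in `ℝ≥0∞`. -/
def wnorm (p δ : ℝ) (k : ℕ) (f : Euc n → ℝ) : ℝ≥0∞ := wnormP p δ k f ^ (1 / p)

/-- The weighted Sobolev norm of a vector field: componentwise, summed. -/
def wnormV (p δ : ℝ) (k : ℕ) (F : Euc n → Euc n) : ℝ≥0∞ :=
  ∑ a, wnorm p δ k fun x => F x a

/-- A weight `δ` is nonexceptional if it is not an integer, or if `2 - n < δ < 0`. -/
def Nonexceptional (n : ℕ) (δ : ℝ) : Prop :=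
  (¬ ∃ m : ℤ, δ = m) ∨ (2 - (n : ℝ) < δ ∧ δ < 0)

namespace Aux
variable {f g : Euc n → ℝ} {s : Set (Euc n)} {x p : Euc n} {i j : Fin n}


lemma pd_congr (h : f =ᶠ[nhds x] g) : pd i f x = pd i g x := by
  unfold pd; rw [h.fderiv_eq]

lemma pd_congr_on (hs : IsOpen s) (h : ∀ y ∈ s, f y = g y) (hx : x ∈ s) :
    pd i f x = pd i g x :=
  pd_congr (Filter.eventuallyEq_of_mem (hs.mem_nhds hx) h)

lemma contDiffOn_pd (hs : IsOpen s) (hf : ContDiffOn ℝ (⊤:ℕ∞) f s) (i : Fin n) :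
    ContDiffOn ℝ (⊤:ℕ∞) (pd i f) s := by
  have h1 : ContDiffOn ℝ (⊤:ℕ∞) (fun y => fderiv ℝ f y) s :=
    hf.fderiv_of_isOpen hs (by exact_mod_cast le_refl _)
  exact h1.clm_apply contDiffOn_const

lemma diffAt (hs : IsOpen s) (hf : ContDiffOn ℝ (⊤:ℕ∞) f s) (hx : x ∈ s) :
    DifferentiableAt ℝ f x :=
  ((hf.differentiableOn (by simp)).differentiableAt (hs.mem_nhds hx))

lemma pd_add (hf : DifferentiableAt ℝ f x) (hg : DifferentiableAt ℝ g x) :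
    pd i (fun y => f y + g y) x = pd i f x + pd i g x := by
  unfold pd; rw [fderiv_fun_add hf hg]; rfl

lemma pd_sub (hf : DifferentiableAt ℝ f x) (hg : DifferentiableAt ℝ g x) :
    pd i (fun y => f y - g y) x = pd i f x - pd i g x := by
  unfold pd; rw [fderiv_fun_sub hf hg]; rfl

lemma pd_const (c : ℝ) : pd i (fun _ => c) x = 0 := by
  unfold pd; rw [fderiv_fun_const]; rfl

lemma pd_const_mul (hf : DifferentiableAt ℝ f x) (c : ℝ) :
    pd i (fun y => c * f y) x = c * pd i f x := by
  unfold pd; rw [fderiv_const_mul hf]; rfl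

lemma pd_mul (hf : DifferentiableAt ℝ f x) (hg : DifferentiableAt ℝ g x) :
    pd i (fun y => f y * g y) x = f x * pd i g x + g x * pd i f x := by
  unfold pd; rw [fderiv_fun_mul hf hg]; simp

lemma pd_sum {ι : Type*} (u : Finset ι) (F : ι → Euc n → ℝ)
    (hF : ∀ b ∈ u, DifferentiableAt ℝ (F b) x) :
    pd i (fun y => ∑ b ∈ u, F b y) x = ∑ b ∈ u, pd i (F b) x := by
  unfold pd; rw [fderiv_fun_sum hF]; simp

lemma pd_coord (a : Fin n) : pd i (fun y : Euc n => y a) x = if i = a then 1 else 0 := by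
  have h : (fun y : Euc n => y a) = (EuclideanSpace.proj a : Euc n →L[ℝ] ℝ) := rfl
  unfold pd
  rw [h, ContinuousLinearMap.fderiv]
  have : (EuclideanSpace.proj a : Euc n →L[ℝ] ℝ) (EuclideanSpace.single i 1)
      = EuclideanSpace.single i (1:ℝ) a := rfl
  rw [this, EuclideanSpace.single_apply]
  simp [eq_comm]


lemma pd_eq_snd (hs : IsOpen s) (hf : ContDiffOn ℝ (⊤:ℕ∞) f s) (hx : x ∈ s) :
    pd i (pd j f) x
      = (fderiv ℝ (fun y => fderiv ℝ f y) x (EuclideanSpace.single i 1))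
          (EuclideanSpace.single j 1) := by
  set f' : Euc n → (Euc n →L[ℝ] ℝ) := fun y => fderiv ℝ f y with hf'
  have hdiff : DifferentiableAt ℝ f' x := by
    have h1 : ContDiffOn ℝ (⊤:ℕ∞) f' s := hf.fderiv_of_isOpen hs (by exact_mod_cast le_refl _)
    exact ((h1.differentiableOn (by simp)).differentiableAt
      (hs.mem_nhds hx))
  have hcomp : pd j f = (ContinuousLinearMap.apply ℝ ℝ (EuclideanSpace.single j (1:ℝ))) ∘ f' := rfl
  rw [show pd i (pd j f) x
      = fderiv ℝ (pd j f) x (EuclideanSpace.single i 1) from rfl, hcomp,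
    fderiv_comp x (ContinuousLinearMap.differentiableAt _) hdiff,
    ContinuousLinearMap.fderiv]
  rfl

lemma pd_comm (hs : IsOpen s) (hf : ContDiffOn ℝ (⊤:ℕ∞) f s) (hx : x ∈ s) :
    pd i (pd j f) x = pd j (pd i f) x := by
  rw [pd_eq_snd hs hf hx, pd_eq_snd hs hf hx]
  set f' : Euc n → (Euc n →L[ℝ] ℝ) := fun y => fderiv ℝ f y with hf'
  have h1 : ContDiffOn ℝ (⊤:ℕ∞) f' s := hf.fderiv_of_isOpen hs (by exact_mod_cast le_refl _)
  have hdiff : DifferentiableAt ℝ f' x :=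
    ((h1.differentiableOn (by simp)).differentiableAt
      (hs.mem_nhds hx))
  have hev : ∀ᶠ y in nhds x, HasFDerivAt f (f' y) y := by
    filter_upwards [hs.mem_nhds hx] with y hy
    exact (((hf.differentiableOn (by simp)).differentiableAt
      (hs.mem_nhds hy))).hasFDerivAt
  exact second_derivative_symmetric_of_eventually hev hdiff.hasFDerivAt _ _


lemma decomp (x : Euc n) : x = ∑ i, x i • EuclideanSpace.single i (1:ℝ) := by
  apply PiLp.ext
  intro j
  rw [show (∑ i, x i • EuclideanSpace.single i (1:ℝ)) j
      = ∑ i, (x i • EuclideanSpace.single i (1:ℝ)) j from by rw [WithLp.ofLp_sum, Finset.sum_apply]]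
  simp [EuclideanSpace.single_apply]

lemma clm_decomp (L : Euc n →L[ℝ] ℝ) (x : Euc n) :
    L x = ∑ i, x i * L (EuclideanSpace.single i 1) := by
  conv_lhs => rw [decomp x]
  rw [map_sum]
  simp

lemma euler_fderiv {m : ℤ} (hf : DifferentiableAt ℝ f x)
    (h : ∀ t : ℝ, 0 < t → f (t • x) = (t : ℝ) ^ m * f x) :
    fderiv ℝ f x x = m * f x := by
  have hline : HasDerivAt (fun t : ℝ => t • x) x 1 := by
    simpa using (hasDerivAt_id (1:ℝ)).smul_const x
  have hg : HasDerivAt (fun t : ℝ => f (t • x)) (fderiv ℝ f x x) 1 := by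
    have hf1 : HasFDerivAt f (fderiv ℝ f x) ((1:ℝ) • x) := by
      rw [one_smul]; exact hf.hasFDerivAt
    have := hf1.comp_hasDerivAt 1 hline
    exact this
  have hg2 : HasDerivAt (fun t : ℝ => f (t • x)) ((m : ℝ) * f x) 1 := by
    have hz : HasDerivAt (fun t : ℝ => (t : ℝ) ^ m * f x) ((m : ℝ) * f x) 1 := by
      have := (hasDerivAt_zpow m (1:ℝ) (Or.inl one_ne_zero)).mul_const (f x)
      simpa using this
    apply hz.congr_of_eventuallyEq
    filter_upwards [eventually_gt_nhds (show (0:ℝ) < 1 by norm_num)] with t ht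
    exact h t ht
  exact hg.unique hg2

lemma euler_pd {m : ℤ} (hf : DifferentiableAt ℝ f x)
    (h : ∀ t : ℝ, 0 < t → f (t • x) = (t : ℝ) ^ m * f x) :
    ∑ i, x i * pd i f x = m * f x := by
  rw [← euler_fderiv hf h]
  exact (clm_decomp (fderiv ℝ f x) x).symm

lemma pd_homog {m : ℤ} (hs : IsOpen s) (hinv : ∀ t : ℝ, 0 < t → ∀ y ∈ s, t • y ∈ s)
    (hf : ContDiffOn ℝ (⊤:ℕ∞) f s)
    (h : ∀ t : ℝ, 0 < t → ∀ y ∈ s, f (t • y) = (t : ℝ) ^ m * f y) :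
    ∀ t : ℝ, 0 < t → ∀ y ∈ s, pd i f (t • y) = (t : ℝ) ^ (m - 1) * pd i f y := by
  intro t ht y hy
  have hty : t • y ∈ s := hinv t ht y hy
  have hdiff : ∀ z ∈ s, DifferentiableAt ℝ f z := fun z hz =>
    ((hf.differentiableOn (by simp)).differentiableAt
      (hs.mem_nhds hz))
  set L : Euc n →L[ℝ] Euc n := t • ContinuousLinearMap.id ℝ (Euc n) with hL
  have hφ : HasFDerivAt (fun z => f (t • z)) ((fderiv ℝ f (t • y)).comp L) y := by
    have h1 : HasFDerivAt (fun z : Euc n => t • z) L y := by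
      have := L.hasFDerivAt (x := y)
      convert this using 2
      rfl
    exact (hdiff _ hty).hasFDerivAt.comp y h1
  have hψ : HasFDerivAt (fun z => (t:ℝ) ^ m * f z) ((t:ℝ) ^ m • fderiv ℝ f y) y := by
    exact (hdiff y hy).hasFDerivAt.const_smul ((t:ℝ)^m) |>.congr_of_eventuallyEq
      (by filter_upwards with z; rfl)
  have heq : (fun z => f (t • z)) =ᶠ[nhds y] fun z => (t:ℝ) ^ m * f z := by
    filter_upwards [hs.mem_nhds hy] with z hz
    exact h t ht z hz
  have hφ2 : HasFDerivAt (fun z => (t:ℝ) ^ m * f z) ((fderiv ℝ f (t • y)).comp L) y :=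
    hφ.congr_of_eventuallyEq heq.symm
  have huniq := hφ2.unique hψ
  have happ := congrArg (fun (M : Euc n →L[ℝ] ℝ) => M (EuclideanSpace.single i 1)) huniq
  simp only [ContinuousLinearMap.comp_apply, ContinuousLinearMap.smul_apply] at happ
  rw [show L (EuclideanSpace.single i 1) = t • EuclideanSpace.single i (1:ℝ) from rfl,
    ContinuousLinearMap.map_smul] at happ
  have ht' : (t:ℝ) ≠ 0 := ne_of_gt ht
  have : t * pd i f (t • y) = (t:ℝ) ^ m * pd i f y := by
    simpa [pd, smul_eq_mul] using happ
  have hpow : (t:ℝ) ^ (m - 1) = (t:ℝ) ^ m / t := by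
    rw [zpow_sub₀ ht']; simp
  rw [hpow]
  field_simp
  linarith [this]


lemma diffAt' (hs : IsOpen s) (hf : ContDiffOn ℝ (⊤:ℕ∞) f s) {x : Euc n} (hx : x ∈ s) :
    DifferentiableAt ℝ f x :=
  ((hf.differentiableOn (by simp)).differentiableAt
    (hs.mem_nhds hx))

lemma contDiffOn_pd' (hs : IsOpen s) (hf : ContDiffOn ℝ (⊤:ℕ∞) f s) (i : Fin n) :
    ContDiffOn ℝ (⊤:ℕ∞) (pd i f) s := by
  have h1 : ContDiffOn ℝ (⊤:ℕ∞) (fun y => fderiv ℝ f y) s :=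
    hf.fderiv_of_isOpen hs (by exact_mod_cast le_refl _)
  exact h1.clm_apply contDiffOn_const

/-- 1D: if `g` has derivative `G` near `0`, `G` has derivative `c` at `0`, and `g` has a
local max at `0`, then `c ≤ 0`. -/
lemma second_deriv_nonpos_1d {g G : ℝ → ℝ} {c : ℝ}
    (hg : ∀ᶠ t in nhds (0:ℝ), HasDerivAt g (G t) t)
    (hG : HasDerivAt G c 0) (hmax : IsLocalMax g 0) : c ≤ 0 := by
  by_contra hc
  push_neg at hc
  have hG0 : G 0 = 0 := hmax.hasDerivAt_eq_zero hg.self_of_nhds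
  have hslope : Filter.Tendsto (slope G 0) (nhdsWithin 0 {(0:ℝ)}ᶜ) (nhds c) :=
    hasDerivAt_iff_tendsto_slope.mp hG
  have hpos : ∀ᶠ t in nhdsWithin 0 (Set.Ioi (0:ℝ)), 0 < G t := by
    have h1 : ∀ᶠ t in nhdsWithin 0 {(0:ℝ)}ᶜ, 0 < slope G 0 t :=
      hslope.eventually (eventually_gt_nhds hc)
    have h2 : nhdsWithin (0:ℝ) (Set.Ioi 0) ≤ nhdsWithin 0 {(0:ℝ)}ᶜ :=
      nhdsWithin_mono 0 (fun t ht => ne_of_gt ht)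
    filter_upwards [h2 h1, self_mem_nhdsWithin] with t ht ht'
    have : slope G 0 t = G t / t := by
      rw [slope_def_field, hG0]; ring
    rw [this] at ht
    have ht0 : (0:ℝ) < t := ht'
    by_contra hGt
    push_neg at hGt
    have : G t / t ≤ 0 := div_nonpos_of_nonpos_of_nonneg hGt (le_of_lt ht0)
    linarith
  obtain ⟨d, hd, hIoc⟩ := mem_nhdsGT_iff_exists_Ioc_subset.mp hpos
  obtain ⟨ε, hε, hball⟩ := Metric.mem_nhds_iff.mp (hg.and hmax)
  set b := min (ε/2) d with hb
  have hb0 : 0 < b := lt_min (by linarith) hd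
  have hmem : ∀ t ∈ Set.Icc (0:ℝ) b, HasDerivAt g (G t) t ∧ g t ≤ g 0 := by
    intro t ht
    apply hball
    rw [Metric.mem_ball, Real.dist_eq]
    rcases ht with ⟨h1, h2⟩
    rw [abs_of_nonneg (by linarith [h1] : (0:ℝ) ≤ t - 0)]
    have := min_le_left (ε/2) d
    simp only [sub_zero]
    linarith
  have hcont : ContinuousOn g (Set.Icc 0 b) := fun t ht =>
    ((hmem t ht).1.continuousAt).continuousWithinAt
  obtain ⟨ξ, hξ, hξeq⟩ := exists_hasDerivAt_eq_slope g G hb0 hcont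
    (fun t ht => (hmem t ⟨le_of_lt ht.1, le_of_lt ht.2⟩).1)
  have hξpos : 0 < G ξ := hIoc ⟨hξ.1, le_trans (le_of_lt hξ.2) (min_le_right _ _)⟩
  have hgb : g b ≤ g 0 := (hmem b ⟨le_of_lt hb0, le_refl _⟩).2
  rw [hξeq] at hξpos
  have : (g b - g 0) / (b - 0) ≤ 0 :=
    div_nonpos_of_nonpos_of_nonneg (by linarith) (by linarith)
  linarith

/-- At an interior local max of a smooth function, each pure second partial is `≤ 0`. -/
lemma pd2_nonpos_at_max (hs : IsOpen s) (hf : ContDiffOn ℝ (⊤:ℕ∞) f s) (hp : p ∈ s)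
    (hmax : IsLocalMax f p) (i : Fin n) : pd i (pd i f) p ≤ 0 := by
  set e : Euc n := EuclideanSpace.single i (1:ℝ) with he
  set L : ℝ → Euc n := fun t => p + t • e with hL
  have hL0 : L 0 = p := by simp [hL]
  have hLcont : Continuous L := by fun_prop
  have hLd : ∀ t : ℝ, HasDerivAt L e t := by
    intro t
    simpa [hL] using ((hasDerivAt_id t).smul_const e).const_add p
  have hdom : ∀ᶠ t in nhds (0:ℝ), L t ∈ s := by
    have : Filter.Tendsto L (nhds 0) (nhds p) := by
      rw [← hL0]; exact hLcont.continuousAt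
    exact this.eventually (hs.eventually_mem hp)
  have hg : ∀ᶠ t in nhds (0:ℝ), HasDerivAt (f ∘ L) ((pd i f ∘ L) t) t := by
    filter_upwards [hdom] with t ht
    exact (diffAt' hs hf ht).hasFDerivAt.comp_hasDerivAt t (hLd t)
  have hG : HasDerivAt (pd i f ∘ L) (pd i (pd i f) p) 0 := by
    have hd : DifferentiableAt ℝ (pd i f) p := diffAt' hs (contDiffOn_pd' hs hf i) hp
    have hd' : HasFDerivAt (pd i f) (fderiv ℝ (pd i f) p) (L 0) := by
      rw [hL0]; exact hd.hasFDerivAt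
    exact hd'.comp_hasDerivAt 0 (hLd 0)
  have hmaxg : IsLocalMax (f ∘ L) 0 := by
    have htd : Filter.Tendsto L (nhds 0) (nhds p) := by
      rw [← hL0]; exact hLcont.continuousAt
    have := htd.eventually hmax
    filter_upwards [this] with t ht
    simpa [hL0] using ht
  exact second_deriv_nonpos_1d hg hG hmaxg


/-- Smooth on `s` and positively homogeneous of integer degree `m`. -/
def Hom (s : Set (Euc n)) (m : ℤ) (f : Euc n → ℝ) : Prop :=
  ContDiffOn ℝ (⊤:ℕ∞) f s ∧ ∀ t : ℝ, 0 < t → ∀ y ∈ s, f (t • y) = (t:ℝ) ^ m * f y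

variable {m k : ℤ} {F : Fin n → Euc n → ℝ}

lemma Hom.smooth (h : Hom s m f) : ContDiffOn ℝ (⊤:ℕ∞) f s := h.1

lemma Hom.diffAt (hs : IsOpen s) (h : Hom s m f) (hx : x ∈ s) : DifferentiableAt ℝ f x :=
  diffAt' hs h.1 hx

lemma Hom.pdH (hs : IsOpen s) (hinv : ∀ t : ℝ, 0 < t → ∀ y ∈ s, t • y ∈ s)
    (h : Hom s m f) (i : Fin n) : Hom s (m - 1) (pd i f) :=
  ⟨contDiffOn_pd' hs h.1 i, pd_homog hs hinv h.1 h.2⟩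

lemma Hom.add (h1 : Hom s m f) (h2 : Hom s m g) : Hom s m (fun y => f y + g y) := by
  refine ⟨h1.1.add h2.1, fun t ht y hy => ?_⟩
  simp only []
  show f (t • y) + g (t • y) = _
  rw [h1.2 t ht y hy, h2.2 t ht y hy]; ring

lemma Hom.mul (h1 : Hom s m f) (h2 : Hom s k g) : Hom s (m + k) (fun y => f y * g y) := by
  refine ⟨h1.1.mul h2.1, fun t ht y hy => ?_⟩
  show f (t • y) * g (t • y) = _
  rw [h1.2 t ht y hy, h2.2 t ht y hy, zpow_add₀ (ne_of_gt ht)]; ring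

lemma Hom.const_mul (h : Hom s m f) (c : ℝ) : Hom s m (fun y => c * f y) := by
  refine ⟨h.1.const_smul c, fun t ht y hy => ?_⟩
  show c * f (t • y) = _
  rw [h.2 t ht y hy]; ring

lemma Hom.sum (h : ∀ b, Hom s m (F b)) : Hom s m (fun y => ∑ b, F b y) := by
  refine ⟨?_, fun t ht y hy => ?_⟩
  · exact ContDiffOn.sum (fun b _ => (h b).1)
  · show (∑ b, F b (t • y)) = _
    rw [Finset.mul_sum]
    exact Finset.sum_congr rfl fun b _ => (h b).2 t ht y hy

lemma Hom.coord (a : Fin n) : Hom s 1 (fun y : Euc n => y a) := by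
  constructor
  · have : (fun y : Euc n => y a) = (EuclideanSpace.proj a : Euc n →L[ℝ] ℝ) := rfl
    rw [this]
    exact (ContinuousLinearMap.contDiff _).contDiffOn
  · intro t ht y _
    show (t • y) a = _
    have : (t • y) a = t * y a := rfl
    rw [this, zpow_one]

lemma Hom.euler (hs : IsOpen s) (h : Hom s m f) (hx : x ∈ s) :
    ∑ i, x i * pd i f x = (m : ℝ) * f x := by
  refine euler_pd (h.diffAt hs hx) (fun t ht => h.2 t ht x hx)


/-! ### Main development -/

def Om (n : ℕ) : Set (Euc n) := {x : Euc n | x ≠ 0}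

lemma isOpen_Om : IsOpen (Om n) := isOpen_ne

lemma inv_Om : ∀ t : ℝ, 0 < t → ∀ y ∈ Om n, t • y ∈ Om n := fun t ht y hy =>
  smul_ne_zero (ne_of_gt ht) hy

lemma diff_coord (a : Fin n) (x : Euc n) : DifferentiableAt ℝ (fun z : Euc n => z a) x := by
  have : (fun z : Euc n => z a) = (EuclideanSpace.proj a : Euc n →L[ℝ] ℝ) := rfl
  rw [this]
  exact (EuclideanSpace.proj (𝕜 := ℝ) a).differentiableAt

def Xc (X : Euc n → Euc n) (b : Fin n) : Euc n → ℝ := fun y => X y b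

def dvg (X : Euc n → Euc n) : Euc n → ℝ := fun y => ∑ b, pd b (Xc X b) y

structure Setup (n : ℕ) (X : Euc n → Euc n) : Prop where
  hn : 3 ≤ n
  smooth : ContDiffOn ℝ (⊤:ℕ∞) X (Om n)
  hom : ∀ t : ℝ, 0 < t → ∀ y ∈ Om n, X (t • y) = X y
  lap : ∀ x ∈ Om n, ∀ a : Fin n, ∑ b, pd b (cko X a b) x = 0

variable {X : Euc n → Euc n}

lemma Setup.hXc (S : Setup n X) (b : Fin n) : Hom (Om n) 0 (Xc X b) := by
  constructor
  · have : Xc X b = fun y => (EuclideanSpace.proj b : Euc n →L[ℝ] ℝ) (X y) := rfl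
    rw [this]
    exact (EuclideanSpace.proj b).contDiff.comp_contDiffOn S.smooth
  · intro t ht y hy
    show X (t • y) b = _
    rw [S.hom t ht y hy, zpow_zero, one_mul]
    rfl

lemma Setup.hu (S : Setup n X) : Hom (Om n) (-1) (dvg X) := by
  have : ∀ b : Fin n, Hom (Om n) (-1) (pd b (Xc X b)) := fun b =>
    (S.hXc b).pdH isOpen_Om inv_Om b
  exact Hom.sum this

/-- The component equation `ΔX_a = -(1 - 2/n) ∂_a (div X)`. -/
lemma Setup.E1 (S : Setup n X) : ∀ x ∈ Om n, ∀ a : Fin n,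
    (∑ i, pd i (pd i (Xc X a)) x) = -((1:ℝ) - 2/(n:ℝ)) * pd a (dvg X) x := by
  intro x hx a
  have hOm : IsOpen (Om n) := isOpen_Om
  have dXc2 : ∀ b c : Fin n, DifferentiableAt ℝ (pd c (Xc X b)) x := fun b c =>
    diffAt' hOm (contDiffOn_pd' hOm (S.hXc b).1 c) hx
  have du : DifferentiableAt ℝ (dvg X) x := S.hu.diffAt hOm hx
  have key := S.lap x hx a
  have hsummand : ∀ b : Fin n, pd b (cko X a b) x
      = pd b (pd a (Xc X b)) x + pd b (pd b (Xc X a)) x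
        - (if a = b then 2/(n:ℝ) else 0) * pd b (dvg X) x := by
    intro b
    have hck : cko X a b = fun y => (pd a (Xc X b) y + pd b (Xc X a) y)
        - (if a = b then 2/(n:ℝ) else 0) * dvg X y := rfl
    rw [hck, pd_sub ((dXc2 b a).fun_add (dXc2 a b)) (du.const_mul _),
      pd_add (dXc2 b a) (dXc2 a b), pd_const_mul du]
  rw [Finset.sum_congr rfl (fun b _ => hsummand b), Finset.sum_sub_distrib,
    Finset.sum_add_distrib] at key
  have t1 : ∑ b, pd b (pd a (Xc X b)) x = pd a (dvg X) x := by
    rw [Finset.sum_congr rfl (fun b _ => pd_comm hOm (S.hXc b).1 hx)]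
    have hdvg : dvg X = fun y => ∑ b, pd b (Xc X b) y := rfl
    rw [hdvg, pd_sum univ _ (fun b _ => dXc2 b b)]
  have t3 : ∑ b, (if a = b then 2/(n:ℝ) else 0) * pd b (dvg X) x
      = 2/(n:ℝ) * pd a (dvg X) x := by
    simp only [ite_mul, zero_mul]
    rw [Finset.sum_ite_eq]
    simp
  rw [t1, t3] at key
  linarith [key]

/-- `div X` is harmonic. -/
lemma Setup.E2 (S : Setup n X) : ∀ x ∈ Om n, ∑ i, pd i (pd i (dvg X)) x = 0 := by
  intro x hx
  have hOm : IsOpen (Om n) := isOpen_Om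
  have hXcb := S.hXc
  have du2 : ∀ y ∈ Om n, ∀ b c : Fin n, DifferentiableAt ℝ (pd c (Xc X b)) y := fun y hy b c =>
    diffAt' hOm (contDiffOn_pd' hOm (hXcb b).1 c) hy
  have h2 : ∀ i : Fin n, pd i (pd i (dvg X)) x = ∑ b, pd i (pd i (pd b (Xc X b))) x := by
    intro i
    have h1 : ∀ y ∈ Om n, pd i (dvg X) y = ∑ b, pd i (pd b (Xc X b)) y := by
      intro y hy
      have hdvg : dvg X = fun z => ∑ b, pd b (Xc X b) z := rfl
      rw [hdvg, pd_sum univ _ (fun b _ => du2 y hy b b)]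
    rw [pd_congr_on hOm h1 hx,
      pd_sum univ _ (fun b _ => diffAt' hOm (contDiffOn_pd' hOm
        (contDiffOn_pd' hOm (hXcb b).1 b) i) hx)]
  have h4 : ∀ b i : Fin n, pd i (pd i (pd b (Xc X b))) x
      = pd b (pd i (pd i (Xc X b))) x := by
    intro b i
    have h3 : ∀ y ∈ Om n, pd i (pd b (Xc X b)) y = pd b (pd i (Xc X b)) y := fun y hy =>
      pd_comm hOm (hXcb b).1 hy
    rw [pd_congr_on hOm h3 hx]
    exact pd_comm hOm (contDiffOn_pd' hOm (hXcb b).1 i) hx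
  have h5 : ∀ b : Fin n, ∑ i, pd b (pd i (pd i (Xc X b))) x
      = -((1:ℝ) - 2/(n:ℝ)) * pd b (pd b (dvg X)) x := by
    intro b
    have hsum : ∑ i, pd b (pd i (pd i (Xc X b))) x
        = pd b (fun y => ∑ i, pd i (pd i (Xc X b)) y) x := by
      rw [pd_sum univ _ (fun i _ => diffAt' hOm (contDiffOn_pd' hOm
        (contDiffOn_pd' hOm (hXcb b).1 i) i) hx)]
    rw [hsum]
    have hE1 : ∀ y ∈ Om n, (fun z => ∑ i, pd i (pd i (Xc X b)) z) y
        = -((1:ℝ) - 2/(n:ℝ)) * pd b (dvg X) y := fun y hy => S.E1 y hy b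
    rw [pd_congr_on hOm hE1 hx, pd_const_mul (diffAt' hOm (contDiffOn_pd' hOm
      (S.hu.smooth) b) hx)]
  have main : ∑ i, pd i (pd i (dvg X)) x
      = -((1:ℝ) - 2/(n:ℝ)) * ∑ b, pd b (pd b (dvg X)) x :=
    calc ∑ i, pd i (pd i (dvg X)) x
        = ∑ i, ∑ b, pd i (pd i (pd b (Xc X b))) x :=
          Finset.sum_congr rfl (fun i _ => h2 i)
      _ = ∑ b, ∑ i, pd i (pd i (pd b (Xc X b))) x := Finset.sum_comm
      _ = ∑ b, ∑ i, pd b (pd i (pd i (Xc X b))) x :=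
          Finset.sum_congr rfl (fun b _ => Finset.sum_congr rfl (fun i _ => h4 b i))
      _ = ∑ b, -((1:ℝ) - 2/(n:ℝ)) * pd b (pd b (dvg X)) x :=
          Finset.sum_congr rfl (fun b _ => h5 b)
      _ = -((1:ℝ) - 2/(n:ℝ)) * ∑ b, pd b (pd b (dvg X)) x := by rw [← Finset.mul_sum]
  have hn3 : (3:ℝ) ≤ (n:ℝ) := by exact_mod_cast S.hn
  have hfac : (0:ℝ) < 2 - 2/(n:ℝ) := by
    have : 2/(n:ℝ) ≤ 2/3 := by
      apply div_le_div_of_nonneg_left (by norm_num) (by norm_num) hn3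
    linarith
  nlinarith [main]

/-- The auxiliary harmonic field `Y_a = X_a + ((n-2)/(2n)) x_a (div X)`. -/
def Yf (X : Euc n → Euc n) (a : Fin n) : Euc n → ℝ :=
  fun y => Xc X a y + ((n:ℝ) - 2)/(2*(n:ℝ)) * (y a * dvg X y)

lemma Setup.hY (S : Setup n X) (a : Fin n) : Hom (Om n) 0 (Yf X a) := by
  have h1 : Hom (Om n) (1 + -1) (fun y : Euc n => y a * dvg X y) :=
    (Hom.coord a).mul S.hu
  norm_num at h1
  exact (S.hXc a).add (h1.const_mul _)

lemma Setup.E3 (S : Setup n X) (a : Fin n) :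
    ∀ x ∈ Om n, ∑ i, pd i (pd i (Yf X a)) x = 0 := by
  intro x hx
  have hOm : IsOpen (Om n) := isOpen_Om
  set c : ℝ := ((n:ℝ) - 2)/(2*(n:ℝ)) with hc
  have dco : ∀ (y : Euc n) (b : Fin n), DifferentiableAt ℝ (fun z : Euc n => z b) y :=
    fun y b => diff_coord b y
  have dXc : ∀ y ∈ Om n, DifferentiableAt ℝ (Xc X a) y := fun y hy =>
    (S.hXc a).diffAt hOm hy
  have du : ∀ y ∈ Om n, DifferentiableAt ℝ (dvg X) y := fun y hy => S.hu.diffAt hOm hy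
  have dpu : ∀ (i : Fin n), ∀ y ∈ Om n, DifferentiableAt ℝ (pd i (dvg X)) y := fun i y hy =>
    diffAt' hOm (contDiffOn_pd' hOm S.hu.smooth i) hy
  have dpXc : ∀ (i : Fin n), ∀ y ∈ Om n, DifferentiableAt ℝ (pd i (Xc X a)) y := fun i y hy =>
    diffAt' hOm (contDiffOn_pd' hOm (S.hXc a).1 i) hy
  -- first derivative of Y
  have hg : ∀ (i : Fin n), ∀ y ∈ Om n, pd i (Yf X a) y
      = pd i (Xc X a) y + c * (y a * pd i (dvg X) y
        + dvg X y * (if i = a then 1 else 0)) := by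
    intro i y hy
    have hY : Yf X a = fun z => Xc X a z + c * (z a * dvg X z) := rfl
    rw [hY, pd_add (dXc y hy) (((dco y a).fun_mul (du y hy)).const_mul c),
      pd_const_mul ((dco y a).fun_mul (du y hy)), pd_mul (dco y a) (du y hy), pd_coord]
  -- second derivatives
  have hgi : ∀ i : Fin n, pd i (pd i (Yf X a)) x
      = pd i (pd i (Xc X a)) x + c * ((x a * pd i (pd i (dvg X)) x
          + pd i (dvg X) x * (if i = a then 1 else 0))
        + pd i (dvg X) x * (if i = a then 1 else 0)) := by
    intro i
    rw [pd_congr_on hOm (hg i) hx]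
    have d1 : DifferentiableAt ℝ (fun y : Euc n => y a * pd i (dvg X) y) x :=
      (dco x a).mul (dpu i x hx)
    have d2 : DifferentiableAt ℝ (fun y => dvg X y * (if i = a then (1:ℝ) else 0)) x :=
      (du x hx).mul (differentiableAt_const _)
    rw [pd_add (dpXc i x hx) ((d1.fun_add d2).const_mul c), pd_const_mul (d1.fun_add d2),
      pd_add d1 d2, pd_mul (dco x a) (dpu i x hx), pd_coord,
      pd_mul (du x hx) (differentiableAt_const _), pd_const]
    ring_nf
  have hite : ∀ g : Fin n → ℝ, ∑ i, g i * (if i = a then (1:ℝ) else 0) = g a := by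
    intro g
    simp [mul_ite]
  have hsum : ∑ i, pd i (pd i (Yf X a)) x
      = ∑ i, pd i (pd i (Xc X a)) x
        + c * ((x a * ∑ i, pd i (pd i (dvg X)) x + pd a (dvg X) x) + pd a (dvg X) x) := by
    rw [Finset.sum_congr rfl (fun i _ => hgi i), Finset.sum_add_distrib, ← Finset.mul_sum]
    congr 1
    rw [Finset.sum_add_distrib, Finset.sum_add_distrib, ← Finset.mul_sum,
      hite (fun i => pd i (dvg X) x)]
  rw [hsum, S.E1 x hx a, S.E2 x hx]
  have hnne : (n:ℝ) ≠ 0 := by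
    have : 3 ≤ n := S.hn
    positivity
  field_simp [hc]
  have hc2 : (n:ℝ) * c * 2 = n - 2 := by rw [hc]; field_simp
  linear_combination (pd a (dvg X) x) * hc2

section Bochner

variable {v : Euc n → ℝ}

def Qf (v : Euc n → ℝ) : Euc n → ℝ := fun y => ∑ i, pd i v y * pd i v y

def Nf (n : ℕ) : Euc n → ℝ := fun y => ∑ i, y i * y i

lemma Nf_eq_norm (y : Euc n) : Nf n y = ‖y‖^2 := by
  rw [EuclideanSpace.norm_eq, Real.sq_sqrt (Finset.sum_nonneg fun i _ => sq_nonneg _)]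
  exact Finset.sum_congr rfl fun i _ => by
    rw [Real.norm_eq_abs, sq_abs, sq]

lemma pd_Nf (i : Fin n) (y : Euc n) : pd i (Nf n) y = 2 * y i := by
  have : Nf n = fun z : Euc n => ∑ k, z k * z k := rfl
  rw [this, pd_sum univ _ (fun k _ => (diff_coord k y).fun_mul (diff_coord k y))]
  have : ∀ k : Fin n, pd i (fun z : Euc n => z k * z k) y
      = 2 * (y k * (if i = k then 1 else 0)) := by
    intro k
    rw [pd_mul (diff_coord k y) (diff_coord k y), pd_coord]
    ring
  rw [Finset.sum_congr rfl (fun k _ => this k), ← Finset.mul_sum]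
  simp [mul_ite]

lemma hom_Nf : Hom (Om n) 2 (Nf n) := by
  have h : Hom (Om n) (1 + 1) (Nf n) :=
    Hom.sum (fun i => (Hom.coord i).mul (Hom.coord i))
  norm_num at h
  exact h

lemma hom_pdv (hv : Hom (Om n) 0 v) (i : Fin n) : Hom (Om n) (-1) (pd i v) := by
  have h := hv.pdH isOpen_Om inv_Om i
  norm_num at h
  exact h

lemma hom_Qf (hv : Hom (Om n) 0 v) : Hom (Om n) (-2) (Qf v) := by
  have h : Hom (Om n) (-1 + -1) (Qf v) :=
    Hom.sum (fun i => (hom_pdv hv i).mul (hom_pdv hv i))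
  norm_num at h
  exact h

/-- Differentiated Euler identity: `Hess v · x = -∇v`. -/
lemma hessian_euler (hv : Hom (Om n) 0 v) :
    ∀ x ∈ Om n, ∀ j : Fin n,
      pd j v x + ∑ i, x i * pd i (pd j v) x = 0 := by
  intro x hx j
  have hOm : IsOpen (Om n) := isOpen_Om
  have dpv : ∀ (i : Fin n), ∀ y ∈ Om n, DifferentiableAt ℝ (pd i v) y := fun i y hy =>
    diffAt' hOm (contDiffOn_pd' hOm hv.1 i) hy
  have hh0 : ∀ y ∈ Om n, (fun z => ∑ i, z i * pd i v z) y = (0:ℝ) := by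
    intro y hy
    have := hv.euler hOm hy
    simpa using this
  have hz : pd j (fun z => ∑ i, z i * pd i v z) x = 0 := by
    rw [show (0:ℝ) = (fun _ : Euc n => (0:ℝ)) x from rfl] at hh0
    rw [pd_congr_on hOm hh0 hx, pd_const]
  have hexp : pd j (fun z => ∑ i, z i * pd i v z) x
      = ∑ i, (x i * pd j (pd i v) x + pd i v x * (if j = i then 1 else 0)) := by
    rw [pd_sum univ _ (fun i _ => (diff_coord i x).fun_mul (dpv i x hx))]
    exact Finset.sum_congr rfl fun i _ => by
      rw [pd_mul (diff_coord i x) (dpv i x hx), pd_coord]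
  rw [hexp] at hz
  rw [Finset.sum_add_distrib] at hz
  have h1 : ∑ i, pd i v x * (if j = i then (1:ℝ) else 0) = pd j v x := by
    simp [mul_ite]
  rw [h1] at hz
  have h2 : ∀ i : Fin n, x i * pd j (pd i v) x = x i * pd i (pd j v) x := fun i => by
    rw [pd_comm hOm hv.1 hx]
  rw [Finset.sum_congr rfl (fun i _ => h2 i)] at hz
  linarith

/-- Bochner: `ΔQ = 2 |Hess v|²` for harmonic `v`. -/
lemma lap_Qf (hv : Hom (Om n) 0 v)
    (hharm : ∀ x ∈ Om n, ∑ i, pd i (pd i v) x = 0) :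
    ∀ x ∈ Om n, ∑ j, pd j (pd j (Qf v)) x
      = 2 * ∑ i, ∑ j, pd j (pd i v) x * pd j (pd i v) x := by
  intro x hx
  have hOm : IsOpen (Om n) := isOpen_Om
  have spv : ∀ i : Fin n, ContDiffOn ℝ (⊤:ℕ∞) (pd i v) (Om n) := fun i =>
    contDiffOn_pd' hOm hv.1 i
  have dpv : ∀ (i : Fin n), ∀ y ∈ Om n, DifferentiableAt ℝ (pd i v) y := fun i y hy =>
    diffAt' hOm (spv i) hy
  have dppv : ∀ (i j : Fin n), ∀ y ∈ Om n, DifferentiableAt ℝ (pd j (pd i v)) y :=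
    fun i j y hy => diffAt' hOm (contDiffOn_pd' hOm (spv i) j) hy
  -- first derivative of Q
  have hdQ : ∀ (j : Fin n), ∀ y ∈ Om n, pd j (Qf v) y
      = ∑ i, (pd i v y * pd j (pd i v) y + pd i v y * pd j (pd i v) y) := by
    intro j y hy
    have hq : Qf v = fun z => ∑ i, pd i v z * pd i v z := rfl
    rw [hq, pd_sum univ _ (fun i _ => (dpv i y hy).fun_mul (dpv i y hy))]
    exact Finset.sum_congr rfl fun i _ => pd_mul (dpv i y hy) (dpv i y hy)
  -- second derivative
  have hd2Q : ∀ j : Fin n, pd j (pd j (Qf v)) x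
      = ∑ i, (2 * (pd i v x * pd j (pd j (pd i v)) x
          + pd j (pd i v) x * pd j (pd i v) x)) := by
    intro j
    rw [pd_congr_on hOm (hdQ j) hx,
      pd_sum univ _ (fun i _ =>
        (((dpv i x hx).fun_mul (dppv i j x hx)).fun_add ((dpv i x hx).fun_mul (dppv i j x hx))))]
    refine Finset.sum_congr rfl fun i _ => ?_
    rw [pd_add ((dpv i x hx).fun_mul (dppv i j x hx)) ((dpv i x hx).fun_mul (dppv i j x hx)),
      pd_mul (dpv i x hx) (dppv i j x hx)]
    ring
  -- the third-derivative trace vanishes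
  have htr : ∀ i : Fin n, ∑ j, pd j (pd j (pd i v)) x = 0 := by
    intro i
    have hswap : ∀ j : Fin n, pd j (pd j (pd i v)) x = pd i (pd j (pd j v)) x := by
      intro j
      have h1 : ∀ y ∈ Om n, pd j (pd i v) y = pd i (pd j v) y := fun y hy =>
        pd_comm hOm hv.1 hy
      rw [pd_congr_on hOm h1 hx]
      exact pd_comm hOm (spv j) hx
    rw [Finset.sum_congr rfl (fun j _ => hswap j),
      ← pd_sum univ _ (fun j _ => dppv j j x hx)]
    have h0 : ∀ y ∈ Om n, (fun z => ∑ j, pd j (pd j v) z) y = (fun _ : Euc n => (0:ℝ)) y :=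
      fun y hy => hharm y hy
    rw [pd_congr_on hOm h0 hx, pd_const]
  calc ∑ j, pd j (pd j (Qf v)) x
      = ∑ j, ∑ i, (2 * (pd i v x * pd j (pd j (pd i v)) x
          + pd j (pd i v) x * pd j (pd i v) x)) :=
        Finset.sum_congr rfl fun j _ => hd2Q j
    _ = ∑ i, ∑ j, (2 * (pd i v x * pd j (pd j (pd i v)) x
          + pd j (pd i v) x * pd j (pd i v) x)) := Finset.sum_comm
    _ = ∑ i, (2 * (pd i v x * ∑ j, pd j (pd j (pd i v)) x)
          + 2 * ∑ j, pd j (pd i v) x * pd j (pd i v) x) := by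
        refine Finset.sum_congr rfl fun i _ => ?_
        have hstep : ∀ (cc : ℝ) (t B : Fin n → ℝ),
            (2*(cc*∑ j, t j) + 2*∑ j, B j * B j) = ∑ j, 2*(cc * t j + B j * B j) := by
          intro cc t B
          rw [show (2:ℝ)*(cc*∑ j, t j) = (2*cc)*∑ j, t j from by ring,
            Finset.mul_sum, Finset.mul_sum, ← Finset.sum_add_distrib]
          exact Finset.sum_congr rfl fun j _ => by ring
        exact (hstep (pd i v x) (fun j => pd j (pd j (pd i v)) x)
          (fun j => pd j (pd i v) x)).symm
    _ = ∑ i, 2 * ∑ j, pd j (pd i v) x * pd j (pd i v) x := by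
        refine Finset.sum_congr rfl fun i _ => ?_
        rw [htr i]
        ring
    _ = 2 * ∑ i, ∑ j, pd j (pd i v) x * pd j (pd i v) x := by rw [← Finset.mul_sum]

def Pf (v : Euc n → ℝ) : Euc n → ℝ := fun y => Nf n y * Qf v y

lemma hom_Pf (hv : Hom (Om n) 0 v) : Hom (Om n) 0 (Pf v) := by
  have h : Hom (Om n) (2 + -2) (Pf v) := hom_Nf.mul (hom_Qf hv)
  norm_num at h
  exact h

lemma lap_Pf (hv : Hom (Om n) 0 v) :
    ∀ x ∈ Om n, ∑ i, pd i (pd i (Pf v)) x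
      = 2*(n:ℝ)*Qf v x + 4*(∑ i, x i * pd i (Qf v) x)
        + Nf n x * ∑ j, pd j (pd j (Qf v)) x := by
  intro x hx
  have hOm : IsOpen (Om n) := isOpen_Om
  have hQ : Hom (Om n) (-2) (Qf v) := hom_Qf hv
  have dN : ∀ y ∈ Om n, DifferentiableAt ℝ (Nf n) y := fun y hy => hom_Nf.diffAt hOm hy
  have dQ : ∀ y ∈ Om n, DifferentiableAt ℝ (Qf v) y := fun y hy => hQ.diffAt hOm hy
  have dpQ : ∀ (i : Fin n), ∀ y ∈ Om n, DifferentiableAt ℝ (pd i (Qf v)) y := fun i y hy =>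
    diffAt' hOm (contDiffOn_pd' hOm hQ.1 i) hy
  have hco : ∀ (i : Fin n) (y : Euc n), DifferentiableAt ℝ (fun z : Euc n => 2 * z i) y :=
    fun i y => (diff_coord i y).const_mul 2
  have hpdP : ∀ (i : Fin n), ∀ y ∈ Om n, pd i (Pf v) y
      = Nf n y * pd i (Qf v) y + Qf v y * (2 * y i) := by
    intro i y hy
    have hP : Pf v = fun z => Nf n z * Qf v z := rfl
    rw [hP, pd_mul (dN y hy) (dQ y hy), pd_Nf]
  have hpd2P : ∀ i : Fin n, pd i (pd i (Pf v)) x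
      = (Nf n x * pd i (pd i (Qf v)) x + pd i (Qf v) x * (2 * x i))
        + (Qf v x * 2 + (2 * x i) * pd i (Qf v) x) := by
    intro i
    rw [pd_congr_on hOm (hpdP i) hx]
    have d1 : DifferentiableAt ℝ (fun y : Euc n => Nf n y * pd i (Qf v) y) x :=
      (dN x hx).mul (dpQ i x hx)
    have d2 : DifferentiableAt ℝ (fun y : Euc n => Qf v y * (2 * y i)) x :=
      (dQ x hx).mul (hco i x)
    rw [pd_add d1 d2, pd_mul (dN x hx) (dpQ i x hx), pd_mul (dQ x hx) (hco i x),
      pd_Nf, pd_const_mul (diff_coord i x), pd_coord]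
    simp
  rw [Finset.sum_congr rfl (fun i _ => hpd2P i)]
  rw [Finset.sum_add_distrib, Finset.sum_add_distrib, Finset.sum_add_distrib,
    ← Finset.mul_sum, Finset.sum_const, Finset.card_univ, Fintype.card_fin]
  have e1 : ∑ i, pd i (Qf v) x * (2 * x i) = 2 * ∑ i, x i * pd i (Qf v) x := by
    rw [Finset.mul_sum]; exact Finset.sum_congr rfl fun i _ => by ring
  have e2 : ∑ i, (2 * x i) * pd i (Qf v) x = 2 * ∑ i, x i * pd i (Qf v) x := by
    rw [Finset.mul_sum]; exact Finset.sum_congr rfl fun i _ => by ring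
  rw [e1, e2, nsmul_eq_mul]
  push_cast
  ring

/-- The key consequence of the maximum principle: a degree-zero homogeneous harmonic
function on `ℝⁿ \ {0}`, `n ≥ 3`, has vanishing gradient. -/
lemma grad_vanishes (hn : 3 ≤ n) (hv : Hom (Om n) 0 v)
    (hharm : ∀ x ∈ Om n, ∑ i, pd i (pd i v) x = 0) :
    ∀ x ∈ Om n, ∀ i : Fin n, pd i v x = 0 := by
  have hOm : IsOpen (Om n) := isOpen_Om
  have hnR : (3:ℝ) ≤ (n:ℝ) := by exact_mod_cast hn
  have hP : Hom (Om n) 0 (Pf v) := hom_Pf hv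
  have hQnn : ∀ y : Euc n, 0 ≤ Qf v y := fun y =>
    Finset.sum_nonneg fun i _ => mul_self_nonneg _
  have hNpos : ∀ y ∈ Om n, 0 < Nf n y := by
    intro y hy
    rw [Nf_eq_norm]
    have hy' : y ≠ 0 := hy
    exact pow_pos (norm_pos_iff.mpr hy') 2
  -- the unit sphere and a max point of P on it
  have hnpos : 0 < n := lt_of_lt_of_le (by norm_num) hn
  have : Nontrivial (Euc n) := by
    have i0 : Fin n := ⟨0, hnpos⟩
    constructor
    refine ⟨EuclideanSpace.single i0 (1:ℝ), 0, fun h => ?_⟩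
    have h0 : (EuclideanSpace.single i0 (1:ℝ)) i0 = (0 : Euc n) i0 :=
      congrArg (fun z : Euc n => z i0) h
    rw [EuclideanSpace.single_apply] at h0
    simp at h0
  have hne : (Metric.sphere (0:Euc n) 1).Nonempty :=
    NormedSpace.sphere_nonempty.mpr zero_le_one
  have hsub : Metric.sphere (0:Euc n) 1 ⊆ Om n := by
    intro y hy
    have : ‖y‖ = 1 := mem_sphere_zero_iff_norm.mp hy
    show y ≠ 0
    intro h0
    rw [h0] at this
    simp at this
  obtain ⟨p, hpS, hpmax⟩ := (isCompact_sphere (0:Euc n) 1).exists_isMaxOn hne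
    ((hP.1.continuousOn).mono hsub)
  have hpnorm : ‖p‖ = 1 := mem_sphere_zero_iff_norm.mp hpS
  have hpO : p ∈ Om n := hsub hpS
  have hNp : Nf n p = 1 := by rw [Nf_eq_norm, hpnorm]; norm_num
  have hglobal : ∀ x ∈ Om n, Pf v x ≤ Pf v p := by
    intro x hx
    have hxne : x ≠ 0 := hx
    have ht : (0:ℝ) < ‖x‖ := norm_pos_iff.mpr hxne
    set ω : Euc n := ‖x‖⁻¹ • x with hωdef
    have hωS : ω ∈ Metric.sphere (0:Euc n) 1 := by
      rw [mem_sphere_zero_iff_norm, hωdef, norm_smul, norm_inv, norm_norm,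
        inv_mul_cancel₀ (ne_of_gt ht)]
    have hωO : ω ∈ Om n := hsub hωS
    have hPx : Pf v x = Pf v ω := by
      have hx' : x = ‖x‖ • ω := (smul_inv_smul₀ (ne_of_gt ht) x).symm
      conv_lhs => rw [hx']
      rw [hP.2 ‖x‖ ht ω hωO, zpow_zero, one_mul]
    rw [hPx]
    exact hpmax hωS
  have hlocmax : IsLocalMax (Pf v) p := by
    filter_upwards [hOm.mem_nhds hpO] with y hy
    exact hglobal y hy
  have hineq : ∑ i, pd i (pd i (Pf v)) p ≤ 0 :=
    Finset.sum_nonpos fun i _ => pd2_nonpos_at_max hOm hP.1 hpO hlocmax i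
  have hΔP := lap_Pf hv p hpO
  have hEulerQ : ∑ i, p i * pd i (Qf v) p = (-2 : ℝ) * Qf v p := by
    have := (hom_Qf hv).euler hOm hpO
    push_cast at this
    linarith [this]
  have hΔQ := lap_Qf hv hharm p hpO
  -- matrix algebra at the max point
  set w : Fin n → ℝ := fun i => pd i v p with hwdef
  set A : Fin n → Fin n → ℝ := fun i j => pd i (pd j v) p with hAdef
  set W : ℝ := Qf v p with hWdef
  set SA : ℝ := ∑ i, ∑ j, pd j (pd i v) p * pd j (pd i v) p with hSAdef
  have hsym : ∀ i j, A i j = A j i := fun i j => pd_comm hOm hv.1 hpO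
  have hAp : ∀ j, ∑ i, p i * A i j = -(w j) := by
    intro j
    have := hessian_euler hv p hpO j
    linarith [this]
  have hpw : ∑ i, p i * w i = 0 := by
    have := hv.euler hOm hpO
    simpa using this
  have hpp : ∑ i, p i * p i = 1 := hNp
  have hwp2 : ∑ j, w j * p j = 0 := by
    rw [Finset.sum_congr rfl (fun j (_ : j ∈ univ) => mul_comm (w j) (p j))]
    exact hpw
  have hWw : W = ∑ i, w i * w i := rfl
  have hSA : SA = ∑ i, ∑ j, A i j * A i j := by
    rw [hSAdef, hAdef]
    exact Finset.sum_comm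
  -- key inequality SA ≥ 2W
  have hkey : 2 * W ≤ SA := by
    have hTi : ∀ i, ∑ j, A i j * p j = -(w i) := by
      intro i
      calc ∑ j, A i j * p j = ∑ j, p j * A j i :=
            Finset.sum_congr rfl fun j _ => by rw [hsym i j]; ring
        _ = -(w i) := hAp i
    have hinner : ∀ i, ∑ j, (A i j + p i * w j + w i * p j) * (A i j + p i * w j + w i * p j)
        = (∑ j, A i j * A i j) + (p i * p i) * W + (w i * w i) * 1
          + 2 * (p i * (∑ j, A i j * w j)) + 2 * (w i * -(w i))
          + 2 * ((p i * w i) * 0) := by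
      intro i
      have r1 : (p i * p i) * W = ∑ j, (p i * p i) * (w j * w j) := by
        rw [hWw]; exact Finset.mul_sum _ _ _
      have r2 : (w i * w i) * 1 = ∑ j, (w i * w i) * (p j * p j) := by
        rw [← hpp]; exact Finset.mul_sum _ _ _
      have r3 : 2 * (p i * (∑ j, A i j * w j)) = ∑ j, 2 * (p i * (A i j * w j)) := by
        rw [Finset.mul_sum univ (fun j => A i j * w j) (p i)]; exact Finset.mul_sum _ _ _
      have r4 : 2 * (w i * -(w i)) = ∑ j, 2 * (w i * (A i j * p j)) := by
        rw [← hTi i, Finset.mul_sum univ (fun j => A i j * p j) (w i)]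
        exact Finset.mul_sum _ _ _
      have r5 : 2 * ((p i * w i) * 0) = ∑ j, 2 * ((p i * w i) * (w j * p j)) := by
        rw [← hwp2, Finset.mul_sum univ (fun j => w j * p j) (p i * w i)]
        exact Finset.mul_sum _ _ _
      rw [r1, r2, r3, r4, r5, ← Finset.sum_add_distrib, ← Finset.sum_add_distrib,
        ← Finset.sum_add_distrib, ← Finset.sum_add_distrib, ← Finset.sum_add_distrib]
      exact Finset.sum_congr rfl fun j _ => by ring
    have houter : ∑ i, ∑ j, (A i j + p i * w j + w i * p j) * (A i j + p i * w j + w i * p j)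
        = SA - 2 * W := by
      rw [Finset.sum_congr rfl (fun i _ => hinner i)]
      rw [Finset.sum_add_distrib, Finset.sum_add_distrib, Finset.sum_add_distrib,
        Finset.sum_add_distrib, Finset.sum_add_distrib]
      have c1 : ∑ i, (p i * p i) * W = W := by
        rw [← Finset.sum_mul, hpp, one_mul]
      have c2 : ∑ i, (w i * w i) * 1 = W := by
        rw [hWw]; exact Finset.sum_congr rfl fun i _ => by ring
      have c3 : ∑ i, 2 * (p i * (∑ j, A i j * w j)) = -(2 * W) :=
        calc ∑ i, 2 * (p i * ∑ j, A i j * w j)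
            = ∑ i, ∑ j, 2 * (p i * (A i j * w j)) := Finset.sum_congr rfl fun i _ => by
              rw [Finset.mul_sum univ (fun j => A i j * w j) (p i)]
              exact Finset.mul_sum _ _ _
          _ = ∑ j, ∑ i, 2 * (p i * (A i j * w j)) := Finset.sum_comm
          _ = ∑ j, 2 * ((∑ i, p i * A i j) * w j) := Finset.sum_congr rfl fun j _ => by
              rw [Finset.sum_mul, Finset.mul_sum]
              exact Finset.sum_congr rfl fun i _ => by ring
          _ = ∑ j, 2 * (-(w j) * w j) := Finset.sum_congr rfl fun j _ => by rw [hAp j]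
          _ = -(2 * W) := by
              rw [hWw, Finset.mul_sum, ← Finset.sum_neg_distrib]
              exact Finset.sum_congr rfl fun j _ => by ring
      have c4 : ∑ i, 2 * (w i * -(w i)) = -(2 * W) := by
        rw [hWw, Finset.mul_sum, ← Finset.sum_neg_distrib]
        exact Finset.sum_congr rfl fun i _ => by ring
      have c5 : ∑ i, 2 * ((p i * w i) * 0) = 0 := by simp
      rw [c1, c2, c3, c4, c5, ← hSA]
      ring
    have hnn : 0 ≤ ∑ i, ∑ j, (A i j + p i * w j + w i * p j) * (A i j + p i * w j + w i * p j) :=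
      Finset.sum_nonneg fun i _ => Finset.sum_nonneg fun j _ => mul_self_nonneg _
    rw [houter] at hnn
    linarith
  -- conclude W = 0
  have hWnn : 0 ≤ W := hQnn p
  have hW0 : W = 0 := by
    rw [hΔP, hNp, hEulerQ, hΔQ] at hineq
    nlinarith
  -- conclude Q ≡ 0 on Ω
  intro x hx i
  have hPp : Pf v p = 0 := by
    show Nf n p * Qf v p = 0
    rw [hNp, ← hWdef, hW0, mul_zero]
  have hPx0 : Pf v x = 0 := by
    have h1 : Pf v x ≤ 0 := hPp ▸ hglobal x hx
    have h2 : 0 ≤ Pf v x := mul_nonneg (le_of_lt (hNpos x hx)) (hQnn x)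
    linarith
  have hQx : Qf v x = 0 := by
    have : Nf n x * Qf v x = 0 := hPx0
    rcases mul_eq_zero.mp this with h | h
    · exact absurd h (ne_of_gt (hNpos x hx))
    · exact h
  have := (Finset.sum_eq_zero_iff_of_nonneg
    (fun j (_ : j ∈ univ) => mul_self_nonneg (pd j v x))).mp hQx i (Finset.mem_univ i)
  exact mul_self_eq_zero.mp this

end Bochner

lemma Setup.conclusion (S : Setup n X) : ∀ x ∈ Om n, dvg X x = 0 := by
  intro x hx
  have hOm : IsOpen (Om n) := isOpen_Om
  set c : ℝ := ((n:ℝ) - 2)/(2*(n:ℝ)) with hc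
  have hgrad : ∀ a : Fin n, pd a (Yf X a) x = 0 := fun a =>
    grad_vanishes S.hn (S.hY a) (S.E3 a) x hx a
  have dco : ∀ b : Fin n, DifferentiableAt ℝ (fun z : Euc n => z b) x := fun b =>
    diff_coord b x
  have du : DifferentiableAt ℝ (dvg X) x := S.hu.diffAt hOm hx
  have hexp : ∀ a : Fin n, pd a (Yf X a) x
      = pd a (Xc X a) x + c * (x a * pd a (dvg X) x + dvg X x * 1) := by
    intro a
    have hY : Yf X a = fun z => Xc X a z + c * (z a * dvg X z) := rfl
    rw [hY, pd_add ((S.hXc a).diffAt hOm hx) (((dco a).fun_mul du).const_mul c),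
      pd_const_mul ((dco a).fun_mul du), pd_mul (dco a) du, pd_coord, if_pos rfl]
  have hEuler : ∑ a, x a * pd a (dvg X) x = -(dvg X x) := by
    have := S.hu.euler hOm hx
    push_cast at this
    linarith
  have hsum0 : ∑ a, pd a (Yf X a) x = 0 := by
    rw [Finset.sum_congr rfl fun a _ => hgrad a]
    simp
  rw [Finset.sum_congr rfl (fun a _ => hexp a), Finset.sum_add_distrib,
    ← Finset.mul_sum] at hsum0
  have h2 : ∑ a, (x a * pd a (dvg X) x + dvg X x * 1)
      = -(dvg X x) + (n:ℝ) * dvg X x := by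
    rw [Finset.sum_add_distrib, hEuler, Finset.sum_const, Finset.card_univ,
      Fintype.card_fin, nsmul_eq_mul, mul_one]
  have h1 : ∑ a, pd a (Xc X a) x = dvg X x := rfl
  rw [h1, h2] at hsum0
  have hnR : (3:ℝ) ≤ (n:ℝ) := by exact_mod_cast S.hn
  have hcnn : (0:ℝ) ≤ c := by
    rw [hc]
    apply div_nonneg <;> linarith
  have hfac : (0:ℝ) < 1 + c * ((n:ℝ) - 1) := by nlinarith
  have heq : dvg X x * (1 + c * ((n:ℝ) - 1)) = 0 := by linear_combination hsum0
  rcases mul_eq_zero.mp heq with h | h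
  · exact h
  · exact absurd h (ne_of_gt hfac)

end Aux

theorem statement3 (n : ℕ) (hn : 3 ≤ n) (X : Euc n → Euc n)
    (hXsmooth : ContDiffOn ℝ (⊤ : ℕ∞) X {x : Euc n | x ≠ 0})
    (hXhom : PosHomog (0 : ℝ) X)
    (hXlap : ∀ x : Euc n, x ≠ 0 → vecLap X x = 0) :
    ∀ x : Euc n, x ≠ 0 → ∑ b, pd b (fun y => X y b) x = 0 := by
  have S : Aux.Setup n X := by
    refine ⟨hn, hXsmooth.of_le (by simp), ?_, ?_⟩
    · intro t ht y hy
      have h := hXhom t ht y hy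
      rwa [Real.rpow_zero, one_smul] at h
    · intro z hz a
      have h0 := hXlap z hz
      have h1 : ((EuclideanSpace.equiv (Fin n) ℝ).symm
          (fun a => (1/2 : ℝ) * ∑ b, pd b (cko X a b) z)) a = (0 : Euc n) a := by
        rw [show (EuclideanSpace.equiv (Fin n) ℝ).symm
            (fun a => (1/2 : ℝ) * ∑ b, pd b (cko X a b) z) = vecLap X z from rfl, h0]
      have h2 : (1/2 : ℝ) * ∑ b, pd b (cko X a b) z = 0 := h1
      linarith
  intro x hx
  exact S.conclusion x hx

end
end

section
/- Let n ≥ 3. For all indices a, b, k ∈ {1,…,n} and all x ∈ ℝ^n ∖ {0}: (𝕃G_{(k)})_{ab}(x) = (4 n (n−2) C_n / r^{n−1}) ( δ_{ak} n_b + δ_{bk} n_a − δ_{ab} n_k + (n−2) n_a n_b n_k ), where r = |x| and n_a = x_a/r. -/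
open MeasureTheory Finset
open scoped ENNReal

noncomputable section

variable {n : ℕ}

/-! Away from the origin, `G^{ak} = -2 C_n ((3n-2) δ_{ak} r^{2-n} + (n-2)² x_a x_k r^{-n})`, so
`∂_c r^s = s r^{s-2} x_c` gives every first derivative explicitly. The divergence of a column
collapses to `4n(n-2) C_n r^{-n} x_k`, and the formula for `𝕃G_{(k)}` is then algebra. -/

theorem hasFDerivAt_norm_rpow_of_ne_zero {E : Type*} [NormedAddCommGroup E]
    [InnerProductSpace ℝ E] (s : ℝ) {x : E} (hx : x ≠ 0) :
    HasFDerivAt (fun y : E => ‖y‖ ^ s) ((s * ‖x‖ ^ (s - 2)) • innerSL ℝ x) x := by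
  have hsq : HasFDerivAt (fun y : E => (‖y‖ ^ 2) ^ (s / 2))
      ((s / 2 * (‖x‖ ^ 2) ^ (s / 2 - 1)) • (2 : ℕ) • innerSL ℝ x) x :=
    (hasStrictFDerivAt_norm_sq x).hasFDerivAt.rpow_const (Or.inl (by positivity))
  have hpow : ∀ (y : E) (t : ℝ), (‖y‖ ^ 2) ^ t = ‖y‖ ^ (2 * t) := fun y t => by
    rw [← Real.rpow_natCast, ← Real.rpow_mul (norm_nonneg y), Nat.cast_two]
  rw [funext fun y => hpow y _, hpow, show 2 * (s / 2) = s by ring,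
    show 2 * (s / 2 - 1) = s - 2 by ring] at hsq
  convert hsq using 1
  ext v
  simp only [smul_apply, coe_innerSL_apply, smul_eq_mul, two_smul, smul_add, add_apply]
  ring

theorem greenFn_eq_of_ne_zero (a k : Fin n) {y : Euc n} (hy : y ≠ 0) :
    GreenFn n a k y = -2 * Cconst n * ((3 * (n : ℝ) - 2) * (if a = k then 1 else 0) *
      ‖y‖ ^ ((2 : ℝ) - n) + ((n : ℝ) - 2) ^ 2 * (y a * y k * ‖y‖ ^ (-(n : ℝ)))) := by
  have hy' : 0 < ‖y‖ := norm_pos_iff.mpr hy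
  rw [GreenFn, show (2 : ℝ) - n = -n + 2 by ring, Real.rpow_add hy', Real.rpow_two]
  field_simp

theorem pd_greenFn (a k c : Fin n) {x : Euc n} (hx : x ≠ 0) :
    pd c (fun y => GreenFn n a k y) x = -2 * Cconst n * ‖x‖ ^ (-(n : ℝ)) *
      ((3 * (n : ℝ) - 2) * (2 - n) * (if a = k then 1 else 0) * x c
        + ((n : ℝ) - 2) ^ 2 * (x a * (if k = c then 1 else 0) + x k * (if a = c then 1 else 0)
          - n * x a * x k * x c / ‖x‖ ^ 2)) := by
  have hx' : 0 < ‖x‖ := norm_pos_iff.mpr hx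
  have hG := (eventually_ne_nhds hx).mono fun y hy => greenFn_eq_of_ne_zero a k hy
  have hproj (i : Fin n) := PiLp.hasFDerivAt_apply (𝕜 := ℝ) 2 x i
  have hderiv := (((hasFDerivAt_norm_rpow_of_ne_zero (2 - n) hx).const_mul
    ((3 * (n : ℝ) - 2) * (if a = k then 1 else 0))).add
    ((((hproj a).mul (hproj k)).mul (hasFDerivAt_norm_rpow_of_ne_zero (-n) hx)).const_mul
    (((n : ℝ) - 2) ^ 2))).const_mul (-2 * Cconst n)
  rw [pd, (hderiv.congr_of_eventuallyEq hG).fderiv, show (2 : ℝ) - n - 2 = -n by ring,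
    Real.rpow_sub hx', Real.rpow_two]
  simp only [add_apply, smul_apply, coe_innerSL_apply, smul_eq_mul, Pi.mul_apply,
    PiLp.proj_apply, PiLp.single_apply, EuclideanSpace.inner_single_right, conj_trivial]
  field_simp
  ring

theorem sum_pd_greenFn (k : Fin n) {x : Euc n} (hx : x ≠ 0) :
    ∑ c, pd c (fun y => GreenFn n c k y) x =
      4 * n * ((n : ℝ) - 2) * Cconst n * ‖x‖ ^ (-(n : ℝ)) * x k := by
  have hx' : ‖x‖ ^ 2 ≠ 0 := by positivity
  have hquad : ∑ c, (n : ℝ) * x c * x k * x c = n * x k * ‖x‖ ^ 2 := by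
    rw [EuclideanSpace.real_norm_sq_eq, Finset.mul_sum]
    exact Finset.sum_congr rfl fun c _ => by ring
  simp only [pd_greenFn _ _ _ hx, ← Finset.mul_sum, Finset.sum_add_distrib, Finset.sum_sub_distrib,
    ← Finset.sum_div, mul_ite, mul_one, mul_zero, ite_mul, zero_mul, Finset.sum_ite_eq,
    Finset.sum_ite_eq', Finset.mem_univ, if_true, hquad, Finset.sum_const, Finset.card_univ,
    Fintype.card_fin, nsmul_eq_mul]
  field_simp
  ring

theorem cko_greenCol (a b k : Fin n) {x : Euc n} (hx : x ≠ 0) :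
    cko (GreenCol n k) a b x = 4 * n * ((n : ℝ) - 2) * Cconst n * ‖x‖ ^ (-(n : ℝ)) *
      ((if a = k then 1 else 0) * x b + (if b = k then 1 else 0) * x a
        - (if a = b then 1 else 0) * x k + ((n : ℝ) - 2) * x a * x b * x k / ‖x‖ ^ 2) := by
  have hn : (n : ℝ) ≠ 0 := Nat.cast_ne_zero.mpr a.pos.ne'
  have hx' : ‖x‖ ^ 2 ≠ 0 := by positivity
  have hcol (j : Fin n) : (fun y => GreenCol n k y j) = fun y => GreenFn n j k y := rfl
  simp only [cko, hcol]
  rw [sum_pd_greenFn _ hx, pd_greenFn _ _ _ hx, pd_greenFn _ _ _ hx]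
  simp only [eq_comm (a := k), eq_comm (a := b) (b := a)]
  split_ifs <;> field_simp <;> ring

theorem statement13_general (n : ℕ) (a b k : Fin n) (x : Euc n) (hx : x ≠ 0) :
    cko (GreenCol n k) a b x =
      4 * n * ((n : ℝ) - 2) * Cconst n / ‖x‖ ^ ((n : ℝ) - 1) *
        ((if a = k then 1 else 0) * (x b / ‖x‖) + (if b = k then 1 else 0) * (x a / ‖x‖)
          - (if a = b then 1 else 0) * (x k / ‖x‖)
          + ((n : ℝ) - 2) * (x a / ‖x‖) * (x b / ‖x‖) * (x k / ‖x‖)) := by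
  have hx' : 0 < ‖x‖ := norm_pos_iff.mpr hx
  have hpow : ‖x‖ ^ (-(n : ℝ)) = (‖x‖ ^ ((n : ℝ) - 1) * ‖x‖)⁻¹ := by
    rw [Real.rpow_neg hx'.le, Real.rpow_sub_one hx'.ne', div_mul_cancel₀ _ hx'.ne']
  rw [cko_greenCol a b k hx, hpow]
  field_simp

theorem statement13 (n : ℕ) (hn : 3 ≤ n) (a b k : Fin n) (x : Euc n) (hx : x ≠ 0) :
    cko (GreenCol n k) a b x =
      4 * n * ((n : ℝ) - 2) * Cconst n / ‖x‖ ^ ((n : ℝ) - 1) *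
        ((if a = k then 1 else 0) * (x b / ‖x‖) + (if b = k then 1 else 0) * (x a / ‖x‖)
          - (if a = b then 1 else 0) * (x k / ‖x‖)
          + ((n : ℝ) - 2) * (x a / ‖x‖) * (x b / ‖x‖) * (x k / ‖x‖)) :=
  statement13_general n a b k x hx

end
end

section
/- Let n ≥ 3 and let u : ℝ^n ∖ {0} → ℝ be a C² function that is harmonic (Δu = 0) and positively homogeneous of degree −1. If n ≥ 4 then u = 0, and if n = 3 then there exists a constant c with u(x) = c/|x| for all x ≠ 0. -/
/-!
Let `M` be the maximum of `u` on the unit sphere, attained at `w₀`. Homogeneity gives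
`u ≤ M / ‖x‖`, and `Δ (1 / ‖x‖) = (3 - n) / ‖x‖³`. So if `n = 3`, or if `M > 0`, then
`M / ‖x‖ - u` is a nonnegative superharmonic function on the connected set `ℝⁿ ∖ {0}` that vanishes
at `w₀`; by the strong minimum principle (Hopf's lemma with a Gaussian barrier) it vanishes
identically. For `n = 3` this is the claim. For `n ≥ 4`, `M / ‖x‖` is not harmonic when `M > 0`,
hence `M ≤ 0` and `u ≤ 0`; applied to `-u` this gives `u = 0`.
-/

open MeasureTheory Finset
open scoped ENNReal

noncomputable section

variable {n : ℕ}

open Filter Topology Metric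

lemma Euc.nontrivial (hn : 0 < n) : Nontrivial (Euc n) :=
  have : Nonempty (Fin n) := ⟨⟨0, hn⟩⟩
  inferInstance

lemma HasFDerivAt.pd_eq {f : Euc n → ℝ} {x : Euc n} {L : Euc n →L[ℝ] ℝ}
    (h : HasFDerivAt f L x) (i : Fin n) : pd i f x = L (EuclideanSpace.single i 1) := by
  rw [pd, h.fderiv]

lemma Filter.EventuallyEq.pd_eq {f g : Euc n → ℝ} {x : Euc n} (h : f =ᶠ[𝓝 x] g) (i : Fin n) :
    pd i f x = pd i g x := by
  rw [pd, pd, h.fderiv_eq]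

lemma ContDiffAt.differentiableAt_pd {f : Euc n → ℝ} {x : Euc n} (hf : ContDiffAt ℝ 2 f x)
    (i : Fin n) : DifferentiableAt ℝ (pd i f) x :=
  ((hf.fderiv_right (m := 1) (by norm_num)).clm_apply contDiffAt_const).differentiableAt
    (by norm_num)

lemma ContDiffAt.eventually_differentiableAt {f : Euc n → ℝ} {x : Euc n}
    (hf : ContDiffAt ℝ 2 f x) : ∀ᶠ y in 𝓝 x, DifferentiableAt ℝ f y :=
  hf.eventually (by simp) |>.mono fun _ hy => hy.differentiableAt (by norm_num)

lemma pd_linear_comb {f g : Euc n → ℝ} {x : Euc n} (hf : DifferentiableAt ℝ f x)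
    (hg : DifferentiableAt ℝ g x) (a b c : ℝ) (i : Fin n) :
    pd i (fun y => a * f y + b * g y + c) x = a * pd i f x + b * pd i g x := by
  simpa [pd] using
    (((hf.hasFDerivAt.const_mul a).add (hg.hasFDerivAt.const_mul b)).add_const c).pd_eq i

lemma lap_linear_comb {f g : Euc n → ℝ} {x : Euc n} (hf : ContDiffAt ℝ 2 f x)
    (hg : ContDiffAt ℝ 2 g x) (a b c : ℝ) :
    lap (fun y => a * f y + b * g y + c) x = a * lap f x + b * lap g x := by
  have hpd (i : Fin n) : pd i (fun y => a * f y + b * g y + c) =ᶠ[𝓝 x]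
      fun y => a * pd i f y + b * pd i g y + 0 := by
    filter_upwards [hf.eventually_differentiableAt, hg.eventually_differentiableAt] with y hfy hgy
    rw [pd_linear_comb hfy hgy, add_zero]
  simp only [lap, (hpd _).pd_eq, pd_linear_comb (hf.differentiableAt_pd _)
    (hg.differentiableAt_pd _), Finset.mul_sum, ← Finset.sum_add_distrib]

lemma Filter.EventuallyEq.lap_eq {f g : Euc n → ℝ} {x : Euc n} (h : f =ᶠ[𝓝 x] g) :
    lap f x = lap g x :=
  Finset.sum_congr rfl fun i _ =>
    Filter.EventuallyEq.pd_eq (h.eventuallyEq_nhds.mono fun _ hy => hy.pd_eq i) i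

lemma lap_neg (f : Euc n → ℝ) (x : Euc n) : lap (fun y => -f y) x = -lap f x := by
  have hpd (g : Euc n → ℝ) (i : Fin n) : pd i (fun y => -g y) = fun y => -pd i g y := by
    ext y
    simp [pd]
  simp [lap, hpd]

lemma IsLocalMax.deriv_deriv_nonpos {h : ℝ → ℝ} {t : ℝ} (hmax : IsLocalMax h t)
    (hc : ContinuousAt h t) : deriv (deriv h) t ≤ 0 := by
  by_contra! hpos
  have hmin := isLocalMin_of_deriv_deriv_pos hpos hmax.deriv_eq_zero hc
  have hconst : h =ᶠ[𝓝 t] fun _ => h t :=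
    (hmin.and hmax).mono fun _ hs => le_antisymm hs.2 hs.1
  have hderiv : deriv h =ᶠ[𝓝 t] fun _ => 0 :=
    hconst.eventuallyEq_nhds.mono fun _ hs => by rw [hs.deriv_eq, deriv_const]
  rw [hderiv.deriv_eq, deriv_const] at hpos
  exact hpos.false

lemma IsLocalMax.pd_pd_nonpos {f : Euc n → ℝ} {x : Euc n} (hf : ContDiffAt ℝ 2 f x)
    (hmax : IsLocalMax f x) (i : Fin n) : pd i (pd i f) x ≤ 0 := by
  set line : ℝ → Euc n := fun t => x + t • EuclideanSpace.single i 1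
  have hline : Continuous line := by fun_prop
  have hline_deriv (t : ℝ) : HasDerivAt line (EuclideanSpace.single i 1) t := by
    simpa [line] using ((hasDerivAt_id' t).smul_const (EuclideanSpace.single i (1 : ℝ))).const_add x
  have hline0 : line 0 = x := by simp [line]
  have hnear : ∀ᶠ t in 𝓝 0, DifferentiableAt ℝ f (line t) :=
    hline.continuousAt.tendsto.eventually (hline0 ▸ hf.eventually_differentiableAt)
  have hderiv : deriv (f ∘ line) =ᶠ[𝓝 0] pd i f ∘ line :=
    hnear.eventually_nhds.mono fun t ht =>
      (ht.self_of_nhds.hasFDerivAt.comp_hasDerivAt t (hline_deriv t)).deriv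
  have hderiv2 : HasDerivAt (pd i f ∘ line) (pd i (pd i f) x) 0 := by
    rw [← hline0] at hf ⊢
    exact (hf.differentiableAt_pd i).hasFDerivAt.comp_hasDerivAt 0 (hline_deriv 0)
  have hmax' : IsLocalMax (f ∘ line) 0 := by
    rw [← hline0] at hmax
    exact hmax.comp_continuous hline.continuousAt
  rw [← hderiv2.deriv, ← hderiv.deriv_eq]
  exact hmax'.deriv_deriv_nonpos ((hline0 ▸ hf.continuousAt).comp hline.continuousAt)

lemma IsLocalMax.lap_nonpos {f : Euc n → ℝ} {x : Euc n} (hf : ContDiffAt ℝ 2 f x)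
    (hmax : IsLocalMax f x) : lap f x ≤ 0 :=
  Finset.sum_nonpos fun i _ => hmax.pd_pd_nonpos hf i

lemma hasFDerivAt_norm_sub_sq (c x : Euc n) :
    HasFDerivAt (fun y => ‖y - c‖ ^ 2) (2 • innerSL ℝ (x - c)) x := by
  simpa using ((hasFDerivAt_id x).sub_const c).norm_sq

lemma pd_comp_norm_sub_sq {g g' : ℝ → ℝ} {c y : Euc n}
    (hg : HasDerivAt g (g' (‖y - c‖ ^ 2)) (‖y - c‖ ^ 2)) (i : Fin n) :
    pd i (fun y => g (‖y - c‖ ^ 2)) y = 2 * g' (‖y - c‖ ^ 2) * (y - c) i := by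
  refine ((hg.comp_hasFDerivAt y (hasFDerivAt_norm_sub_sq c y)).pd_eq i).trans ?_
  simp [EuclideanSpace.inner_single_right]
  ring

lemma lap_comp_norm_sub_sq {g g' : ℝ → ℝ} {g'' : ℝ} {c x : Euc n}
    (hg : ∀ᶠ t in 𝓝 (‖x - c‖ ^ 2), HasDerivAt g (g' t) t)
    (hg' : HasDerivAt g' g'' (‖x - c‖ ^ 2)) :
    lap (fun y => g (‖y - c‖ ^ 2)) x = 4 * g'' * ‖x - c‖ ^ 2 + 2 * n * g' (‖x - c‖ ^ 2) := by
  have hnear : ∀ᶠ y in 𝓝 x, HasDerivAt g (g' (‖y - c‖ ^ 2)) (‖y - c‖ ^ 2) :=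
    ((hasFDerivAt_norm_sub_sq c x).continuousAt.tendsto).eventually hg
  have hcoord (i : Fin n) : HasFDerivAt (fun y : Euc n => (y - c) i)
      (EuclideanSpace.proj i : Euc n →L[ℝ] ℝ) x := by
    simpa using ((EuclideanSpace.proj i : Euc n →L[ℝ] ℝ).hasFDerivAt.sub_const (c i))
  have hpd2 (i : Fin n) :
      pd i (pd i fun y => g (‖y - c‖ ^ 2)) x = 4 * g'' * (x - c) i ^ 2 + 2 * g' (‖x - c‖ ^ 2) := by
    have hpd : pd i (fun y => g (‖y - c‖ ^ 2)) =ᶠ[𝓝 x]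
        fun y => 2 * g' (‖y - c‖ ^ 2) * (y - c) i :=
      hnear.mono fun y hy => pd_comp_norm_sub_sq hy i
    have hg'N := (hg'.comp_hasFDerivAt x (hasFDerivAt_norm_sub_sq c x)).const_mul (2 : ℝ)
    have hprod := hg'N.mul (hcoord i)
    rw [hpd.pd_eq]
    refine (hprod.pd_eq i).trans ?_
    simp [EuclideanSpace.inner_single_right]
    ring
  simp only [lap, hpd2, Finset.sum_add_distrib, ← Finset.mul_sum,
    ← EuclideanSpace.real_norm_sq_eq]
  simp
  ring

lemma lap_norm_sub_sq (c x : Euc n) : lap (fun y => ‖y - c‖ ^ 2) x = 2 * n := by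
  simpa using lap_comp_norm_sub_sq (g := id) (g' := fun _ => 1) (g'' := 0) (c := c) (x := x)
    (.of_forall fun t => hasDerivAt_id t) (hasDerivAt_const _ _)

lemma lap_exp_neg_mul_norm_sub_sq (α : ℝ) (c x : Euc n) :
    lap (fun y => Real.exp (-α * ‖y - c‖ ^ 2)) x =
      (4 * α ^ 2 * ‖x - c‖ ^ 2 - 2 * n * α) * Real.exp (-α * ‖x - c‖ ^ 2) := by
  have hg (t : ℝ) : HasDerivAt (fun t => Real.exp (-α * t)) (-α * Real.exp (-α * t)) t := by
    simpa [mul_comm] using ((hasDerivAt_id t).const_mul (-α)).exp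
  rw [lap_comp_norm_sub_sq (.of_forall hg) ((hg _).const_mul (-α))]
  ring

lemma lap_norm_rpow (p : ℝ) {x : Euc n} (hx : x ≠ 0) :
    lap (fun y => ‖y‖ ^ p) x = p * (p + n - 2) * ‖x‖ ^ (p - 2) := by
  have hsq (y : Euc n) : ‖y‖ ^ p = (‖y - 0‖ ^ 2) ^ (p / 2) := by
    rw [sub_zero, ← Real.rpow_natCast, ← Real.rpow_mul (norm_nonneg y)]
    congr 1
    ring
  have hx2 : 0 < ‖x - 0‖ ^ 2 := by
    rw [sub_zero]
    exact pow_pos (norm_pos_iff.2 hx) 2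
  have hg : ∀ᶠ t in 𝓝 (‖x - 0‖ ^ 2),
      HasDerivAt (fun t => t ^ (p / 2)) (p / 2 * t ^ (p / 2 - 1)) t :=
    (eventually_gt_nhds hx2).mono fun t ht => Real.hasDerivAt_rpow_const (.inl ht.ne')
  have hg' := ((Real.hasDerivAt_rpow_const (p := p / 2 - 1) (.inl hx2.ne')).const_mul (p / 2))
  simp only [hsq]
  rw [lap_comp_norm_sub_sq hg hg']
  have hpow : (‖x‖ ^ 2) ^ (p / 2 - 1) = ‖x‖ ^ (p - 2) := by
    rw [← Real.rpow_natCast, ← Real.rpow_mul (norm_nonneg x)]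
    congr 1
    ring
  rw [sub_zero] at hx2 ⊢
  rw [Real.rpow_sub_one hx2.ne' (p / 2 - 1), hpow]
  field_simp
  ring

lemma IsCompact.exists_isMaxOn_mem_diff_interior {s : Set (Euc n)} (hs : IsCompact s)
    (hne : s.Nonempty) {f : Euc n → ℝ} (hf : ContinuousOn f s)
    (hf2 : ContDiffOn ℝ 2 f (interior s)) (hlap : ∀ x ∈ interior s, 0 < lap f x) :
    ∃ m ∈ s \ interior s, IsMaxOn f s m := by
  obtain ⟨m, hm, hmax⟩ := hs.exists_isMaxOn hne hf
  refine ⟨m, ⟨hm, fun hmi => ?_⟩, hmax⟩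
  have := (hmax.isLocalMax (mem_interior_iff_mem_nhds.1 hmi)).lap_nonpos
    (hf2.contDiffAt (isOpen_interior.mem_nhds hmi))
  linarith [hlap m hmi]

lemma IsCompact.nonpos_of_lap_nonneg (hn : 0 < n) {s : Set (Euc n)} (hs : IsCompact s)
    {f : Euc n → ℝ} (hf : ContinuousOn f s) (hf2 : ContDiffOn ℝ 2 f (interior s))
    (hlap : ∀ x ∈ interior s, 0 ≤ lap f x) (hbdry : ∀ x ∈ s \ interior s, f x ≤ 0)
    {x : Euc n} (hx : x ∈ s) : f x ≤ 0 := by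
  obtain ⟨C, hC⟩ := hs.exists_bound_of_continuousOn (continuous_norm.pow 2).continuousOn
  have hsq_le (y : Euc n) (hy : y ∈ s) : ‖y‖ ^ 2 ≤ C := by simpa using hC y hy
  have hC0 : 0 ≤ C := (sq_nonneg _).trans (hsq_le x hx)
  -- perturb by `η ‖y‖²`, which is strictly subharmonic, and let `η → 0`
  refine le_of_forall_pos_le_add fun ε hε => ?_
  set η := ε / (C + 1)
  have hη : 0 < η := by positivity
  have hsq : ContDiff ℝ 2 fun y : Euc n => ‖y‖ ^ 2 := contDiff_norm_sq ℝ
  set g : Euc n → ℝ := fun y => f y + η * ‖y‖ ^ 2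
  have hglap (y : Euc n) (hy : y ∈ interior s) : 0 < lap g y := by
    have hfy := hf2.contDiffAt (isOpen_interior.mem_nhds hy)
    have := lap_linear_comb hfy hsq.contDiffAt 1 η 0
    simp only [one_mul, add_zero] at this
    have hlapsq : lap (fun y => ‖y‖ ^ 2) y = 2 * n := by simpa using lap_norm_sub_sq 0 y
    rw [this, hlapsq]
    have : (0 : ℝ) < n := by exact_mod_cast hn
    nlinarith [hlap y hy]
  obtain ⟨m, hm, hmax⟩ := hs.exists_isMaxOn_mem_diff_interior ⟨x, hx⟩
    (hf.add (continuousOn_const.mul hsq.continuous.continuousOn))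
    (hf2.add (contDiffOn_const.mul hsq.contDiffOn)) hglap
  have hηC : η * C ≤ ε := by
    rw [div_mul_eq_mul_div, div_le_iff₀ (by positivity)]
    nlinarith
  calc f x ≤ g x := by simp only [g]; nlinarith [sq_nonneg ‖x‖]
    _ ≤ g m := hmax hx
    _ ≤ 0 + η * C := add_le_add (hbdry m hm) (mul_le_mul_of_nonneg_left (hsq_le m hm.1) hη.le)
    _ ≤ 0 + ε := by linarith

lemma dist_eq_or_eq_of_mem_annulus_diff_interior {y x : Euc n} {a b : ℝ}
    (hx : x ∈ (closedBall y b \ ball y a) \ interior (closedBall y b \ ball y a)) :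
    dist x y = a ∨ dist x y = b := by
  obtain ⟨⟨hxb, hxa⟩, hxi⟩ := hx
  simp only [mem_closedBall, mem_ball, not_lt] at hxb hxa
  by_contra! hne
  refine hxi (interior_maximal
    (Set.sdiff_subset_sdiff ball_subset_closedBall ball_subset_closedBall)
    (isOpen_ball.sdiff isClosed_closedBall) ⟨?_, ?_⟩)
  · exact mem_ball.2 (lt_of_le_of_ne hxb hne.2)
  · exact fun h => hne.1 (le_antisymm (mem_closedBall.1 h) hxa)

lemma half_smul_sub_mem_posTangentConeAt_annulus {y z : Euc n} {r : ℝ} (hr : 0 < r)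
    (hz : z ∈ sphere y r) :
    (1 / 2 : ℝ) • (y - z) ∈ posTangentConeAt (closedBall y r \ ball y (r / 2)) z := by
  apply mem_posTangentConeAt_of_segment_subset
  rw [segment_eq_image']
  rintro _ ⟨θ, ⟨hθ0, hθ1⟩, rfl⟩
  have hzy : ‖z - y‖ = r := by simpa [dist_eq_norm] using hz
  have hpt : z + θ • (z + (1 / 2 : ℝ) • (y - z) - z) - y = (1 - θ / 2) • (z - y) := by module
  have hnorm : ‖z + θ • (z + (1 / 2 : ℝ) • (y - z) - z) - y‖ = (1 - θ / 2) * r := by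
    rw [hpt, norm_smul, hzy, Real.norm_of_nonneg (by linarith)]
  simp only [Set.mem_sdiff, mem_closedBall, mem_ball, dist_eq_norm, hnorm, not_lt]
  constructor <;> nlinarith

/-- The exponent `(2n + 1) / r²` makes the barrier subharmonic outside the ball of radius `r / 2`
about `y`. -/
def hopfBarrier (y : Euc n) (r : ℝ) (x : Euc n) : ℝ :=
  Real.exp (-((2 * n + 1) / r ^ 2) * ‖x - y‖ ^ 2)

lemma contDiff_hopfBarrier (y : Euc n) (r : ℝ) : ContDiff ℝ 2 (hopfBarrier y r) :=
  Real.contDiff_exp.comp (contDiff_const.mul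
    ((contDiff_norm_sq ℝ).comp (contDiff_id.sub contDiff_const)))

lemma hopfBarrier_le_one (y : Euc n) (r : ℝ) (x : Euc n) : hopfBarrier y r x ≤ 1 :=
  Real.exp_le_one_iff.2 (by
    have : 0 ≤ (2 * n + 1) / r ^ 2 := by positivity
    nlinarith [sq_nonneg ‖x - y‖])

lemma hopfBarrier_of_mem_sphere {y x : Euc n} {r : ℝ} (hr : r ≠ 0) (hx : x ∈ sphere y r) :
    hopfBarrier y r x = Real.exp (-(2 * n + 1)) := by
  unfold hopfBarrier
  rw [← dist_eq_norm, mem_sphere.1 hx, neg_mul, div_mul_cancel₀ _ (pow_ne_zero 2 hr)]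

lemma lap_hopfBarrier_pos {y x : Euc n} {r : ℝ} (hr : 0 < r) (hx : r / 2 ≤ ‖x - y‖) :
    0 < lap (hopfBarrier y r) x := by
  unfold hopfBarrier
  rw [lap_exp_neg_mul_norm_sub_sq]
  refine mul_pos ?_ (Real.exp_pos _)
  have hα : 0 < (2 * n + 1) / r ^ 2 := by positivity
  have hαr : (2 * n + 1) / r ^ 2 * r ^ 2 = 2 * n + 1 := div_mul_cancel₀ _ (by positivity)
  have hsq : r ^ 2 ≤ 4 * ‖x - y‖ ^ 2 := by nlinarith
  nlinarith [mul_le_mul_of_nonneg_left hsq (mul_nonneg hα.le hα.le)]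

lemma hasFDerivAt_hopfBarrier (y z : Euc n) (r : ℝ) :
    HasFDerivAt (hopfBarrier y r)
      (hopfBarrier y r z • (-((2 * n + 1) / r ^ 2)) • 2 • innerSL ℝ (z - y)) z :=
  (Real.hasDerivAt_exp _).comp_hasFDerivAt z ((hasFDerivAt_norm_sub_sq y z).const_mul _)

lemma hopf_comparison (hn : 0 < n) {w : Euc n → ℝ} {y : Euc n} {r : ℝ} (hr : 0 < r)
    (hreg : ∀ x ∈ closedBall y r, ContDiffAt ℝ 2 w x) (hlap : ∀ x ∈ ball y r, lap w x ≤ 0)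
    (hnn : ∀ x ∈ sphere y r, 0 ≤ w x) {m : ℝ} (hm : 0 ≤ m)
    (hmw : ∀ x ∈ sphere y (r / 2), m ≤ w x) {x : Euc n}
    (hx : x ∈ closedBall y r \ ball y (r / 2)) :
    m * (hopfBarrier y r x - Real.exp (-(2 * n + 1))) ≤ w x := by
  suffices m * hopfBarrier y r x + -1 * w x + -(m * Real.exp (-(2 * n + 1))) ≤ 0 by linarith
  have hB := contDiff_hopfBarrier y r
  refine (isCompact_closedBall y r).diff isOpen_ball |>.nonpos_of_lap_nonneg hn
    (f := fun x => m * hopfBarrier y r x + -1 * w x + -(m * Real.exp (-(2 * n + 1)))) ?_ ?_ ?_ ?_ hx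
  · exact (continuousOn_const.mul hB.continuous.continuousOn).add
      (continuousOn_const.mul fun x hx => (hreg x hx.1).continuousAt.continuousWithinAt)
      |>.add continuousOn_const
  · exact fun x hx => ((contDiffAt_const.mul hB.contDiffAt).add
      (contDiffAt_const.mul (hreg x (interior_subset hx).1))).add contDiffAt_const
      |>.contDiffWithinAt
  · intro x hx
    have hxball : x ∈ ball y r := by
      simpa [interior_closedBall y hr.ne'] using interior_mono Set.sdiff_subset hx
    have hxr : r / 2 ≤ ‖x - y‖ := by simpa [dist_eq_norm] using (interior_subset hx).2
    rw [lap_linear_comb hB.contDiffAt (hreg x (interior_subset hx).1)]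
    nlinarith [lap_hopfBarrier_pos hr hxr, hlap x hxball]
  · intro x hx
    rcases dist_eq_or_eq_of_mem_annulus_diff_interior hx with hxr | hxr
    · nlinarith [hopfBarrier_le_one y r x, hmw x (mem_sphere.2 hxr), Real.exp_pos (-(2 * n + 1))]
    · rw [hopfBarrier_of_mem_sphere hr.ne' (mem_sphere.2 hxr)]
      linarith [hnn x (mem_sphere.2 hxr)]

lemma hopf_lemma (hn : 0 < n) {w : Euc n → ℝ} {y z : Euc n} {r : ℝ} (hr : 0 < r)
    (hreg : ∀ x ∈ closedBall y r, ContDiffAt ℝ 2 w x) (hlap : ∀ x ∈ ball y r, lap w x ≤ 0)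
    (hpos : ∀ x ∈ ball y r, 0 < w x) (hnn : ∀ x ∈ sphere y r, 0 ≤ w x)
    (hz : z ∈ sphere y r) (hwz : w z = 0) :
    0 < fderiv ℝ w z (y - z) := by
  have := Euc.nontrivial hn
  obtain ⟨x₀, hx₀, hmin⟩ := (isCompact_sphere y (r / 2)).exists_isMinOn
    (NormedSpace.sphere_nonempty.2 (by positivity)) fun x hx =>
      (hreg x (sphere_subset_closedBall.trans (closedBall_subset_closedBall (by linarith)) hx))
        |>.continuousAt.continuousWithinAt
  have hm : 0 < w x₀ := hpos x₀ (sphere_subset_ball (by linarith) hx₀)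
  set A := closedBall y r \ ball y (r / 2)
  have hmax : IsMaxOn (fun x => w x₀ * hopfBarrier y r x - w x) A z := by
    intro x hx
    have := hopf_comparison hn hr hreg hlap hnn hm.le (fun x hx => hmin hx) hx
    simp only [Set.mem_ofPred_eq, hwz, hopfBarrier_of_mem_sphere hr.ne' hz]
    linarith
  have hw := ((hreg z (sphere_subset_closedBall hz)).differentiableAt (by norm_num)).hasFDerivAt
  have key := hmax.localize.hasFDerivWithinAt_nonpos
    (((hasFDerivAt_hopfBarrier y z r).const_mul (w x₀)).sub hw).hasFDerivWithinAt
    (half_smul_sub_mem_posTangentConeAt_annulus hr hz)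
  have hinner : inner ℝ (z - y) (y - z) = -r ^ 2 := by
    rw [← neg_sub z y, inner_neg_right, real_inner_self_eq_norm_sq, ← dist_eq_norm,
      mem_sphere.1 hz]
  simp only [sub_apply, smul_apply, map_smul, innerSL_apply_apply, hinner, smul_eq_mul,
    nsmul_eq_mul, Nat.cast_ofNat] at key
  have hα : 0 < (2 * n + 1) / r ^ 2 := by positivity
  have hBz : 0 < hopfBarrier y r z := Real.exp_pos _
  nlinarith [mul_pos (mul_pos hm hBz) (mul_pos hα (pow_pos hr 2))]

lemma isOpen_setOf_eq_zero_of_superharmonic (hn : 0 < n) {U : Set (Euc n)} (hU : IsOpen U)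
    {w : Euc n → ℝ} (hreg : ContDiffOn ℝ 2 w U) (hlap : ∀ x ∈ U, lap w x ≤ 0)
    (hnn : ∀ x ∈ U, 0 ≤ w x) : IsOpen {x | x ∈ U ∧ w x = 0} := by
  rw [Metric.isOpen_iff]
  rintro p ⟨hpU, hwp⟩
  obtain ⟨ρ, hρ, hball⟩ := Metric.isOpen_iff.1 hU p hpU
  have hsub : closedBall p (ρ / 2) ⊆ U := (closedBall_subset_ball (by linarith)).trans hball
  refine ⟨ρ / 4, by positivity, fun y hy => ⟨hball (ball_subset_ball (by linarith) hy), ?_⟩⟩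
  by_contra hwy
  -- a zero `z` of `w` nearest to `y`: the ball around `y` through `z` is zero-free
  set Z := closedBall p (ρ / 2) ∩ w ⁻¹' {0}
  have hZ : IsCompact Z := (isCompact_closedBall p (ρ / 2)).of_isClosed_subset
    ((hreg.continuousOn.mono hsub).preimage_isClosed_of_isClosed isClosed_closedBall
      isClosed_singleton) Set.inter_subset_left
  have hpZ : p ∈ Z := ⟨mem_closedBall_self (by positivity), hwp⟩
  obtain ⟨z, ⟨hzp, hwz : w z = 0⟩, hzy⟩ := hZ.exists_infDist_eq_dist ⟨p, hpZ⟩ y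
  set r := dist y z
  have hr : 0 < r := dist_pos.2 fun h => hwy (h ▸ hwz)
  have hrp : r ≤ dist y p := hzy ▸ infDist_le_dist_of_mem hpZ
  have hyp : dist y p < ρ / 4 := hy
  have hball_sub : closedBall y r ⊆ closedBall p (ρ / 2) :=
    closedBall_subset_closedBall' (by linarith)
  have hpos (x : Euc n) (hx : x ∈ ball y r) : 0 < w x := by
    refine (hnn x (hsub (hball_sub (ball_subset_closedBall hx)))).lt_of_ne' fun hwx => ?_
    have := infDist_le_dist_of_mem (x := y)
      (show x ∈ Z from ⟨hball_sub (ball_subset_closedBall hx), hwx⟩)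
    rw [hzy, dist_comm] at this
    exact (mem_ball.1 hx).not_ge this
  have hhopf := hopf_lemma hn hr
    (fun x hx => hreg.contDiffAt (hU.mem_nhds (hsub (hball_sub hx))))
    (fun x hx => hlap x (hsub (hball_sub (ball_subset_closedBall hx)))) hpos
    (fun x hx => hnn x (hsub (hball_sub (sphere_subset_closedBall hx))))
    (by rw [mem_sphere, dist_comm]) hwz
  have hmin : IsLocalMin w z :=
    Filter.eventually_of_mem (hU.mem_nhds (hsub hzp)) fun x hx => hwz ▸ hnn x hx
  rw [hmin.fderiv_eq_zero] at hhopf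
  exact hhopf.false

lemma eqOn_zero_of_superharmonic (hn : 0 < n) {U : Set (Euc n)} (hU : IsOpen U)
    (hconn : IsPreconnected U) {w : Euc n → ℝ} (hreg : ContDiffOn ℝ 2 w U)
    (hlap : ∀ x ∈ U, lap w x ≤ 0) (hnn : ∀ x ∈ U, 0 ≤ w x) {p : Euc n} (hp : p ∈ U)
    (hwp : w p = 0) : Set.EqOn w 0 U := by
  intro x hx
  by_contra hwx
  obtain ⟨q, -, ⟨-, hwq⟩, hq⟩ := hconn _ _
    (isOpen_setOf_eq_zero_of_superharmonic hn hU hreg hlap hnn)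
    (hreg.continuousOn.isOpen_inter_preimage hU isOpen_Ioi)
    (fun q hq => (hnn q hq).eq_or_lt.elim (fun h => .inl ⟨hq, h.symm⟩) fun h => .inr ⟨hq, h⟩)
    ⟨p, hp, hp, hwp⟩ ⟨x, hx, hx, (hnn x hx).lt_of_ne' hwx⟩
  exact (hq.2 : 0 < w q).ne' hwq

lemma PosHomog.neg {u : Euc n → ℝ} {d : ℝ} (hu : PosHomog d u) : PosHomog d fun y => -u y :=
  fun t ht x hx => by simp [hu t ht x hx]

lemma PosHomog.apply_eq_div_norm {u : Euc n → ℝ} (hu : PosHomog (-1 : ℝ) u) {x : Euc n}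
    (hx : x ≠ 0) : u x = u (‖x‖⁻¹ • x) / ‖x‖ := by
  have hx' : 0 < ‖x‖ := norm_pos_iff.2 hx
  have := hu ‖x‖ hx' (‖x‖⁻¹ • x) (smul_ne_zero (inv_ne_zero hx'.ne') hx)
  rw [smul_smul, mul_inv_cancel₀ hx'.ne', one_smul, Real.rpow_neg_one, smul_eq_mul] at this
  rw [this]
  field_simp

lemma PosHomog.apply_le_div_norm {u : Euc n → ℝ} (hu : PosHomog (-1 : ℝ) u) {M : ℝ}
    (hM : ∀ y ∈ sphere (0 : Euc n) 1, u y ≤ M) {x : Euc n} (hx : x ≠ 0) : u x ≤ M / ‖x‖ := by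
  rw [hu.apply_eq_div_norm hx]
  gcongr
  exact hM _ (by simp [norm_smul, norm_ne_zero_iff.2 hx])

lemma exists_isMaxOn_sphere (hn : 0 < n) {u : Euc n → ℝ} (hu : ContinuousOn u {x : Euc n | x ≠ 0}) :
    ∃ w₀ ∈ sphere (0 : Euc n) 1, IsMaxOn u (sphere 0 1) w₀ := by
  have := Euc.nontrivial hn
  exact (isCompact_sphere 0 1).exists_isMaxOn (NormedSpace.sphere_nonempty.2 zero_le_one)
    (hu.mono fun y hy => ne_zero_of_mem_sphere one_ne_zero ⟨y, hy⟩)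

section HomogeneousHarmonic

variable {u : Euc n → ℝ} (hureg : ContDiffOn ℝ 2 u {x : Euc n | x ≠ 0})
  (huharm : ∀ x : Euc n, x ≠ 0 → lap u x = 0) (huhom : PosHomog (-1 : ℝ) u)
include hureg huharm huhom

lemma eq_div_norm_of_isMaxOn_sphere (hn : 2 ≤ n) {w₀ : Euc n} (hw₀ : w₀ ∈ sphere 0 1)
    (hmax : IsMaxOn u (sphere 0 1) w₀) (hsign : 0 ≤ ((n : ℝ) - 3) * u w₀) {x : Euc n}
    (hx : x ≠ 0) : u x = u w₀ / ‖x‖ := by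
  set M := u w₀
  have hw₀0 : w₀ ≠ 0 := ne_zero_of_mem_sphere one_ne_zero ⟨w₀, hw₀⟩
  have hrank : 1 < Module.rank ℝ (Euc n) := by
    rw [← Module.finrank_eq_rank, finrank_euclideanSpace_fin]
    exact_mod_cast hn
  have hU : IsOpen {x : Euc n | x ≠ 0} := isOpen_compl_singleton
  have hnorm : ContDiffOn ℝ 2 (fun y : Euc n => ‖y‖ ^ (-1 : ℝ)) {x | x ≠ 0} := fun y hy =>
    ((contDiffAt_norm ℝ hy).rpow_const_of_ne (norm_ne_zero_iff.2 hy)).contDiffWithinAt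
  set W := fun y : Euc n => M * ‖y‖ ^ (-1 : ℝ) + -1 * u y + 0
  have hW : Set.EqOn W 0 {x : Euc n | x ≠ 0} := by
    refine eqOn_zero_of_superharmonic (by omega) hU
      (isConnected_compl_singleton_of_one_lt_rank hrank 0).isPreconnected
      ((contDiffOn_const.mul hnorm).add (contDiffOn_const.mul hureg) |>.add contDiffOn_const)
      ?_ ?_ hw₀0 ?_
    · intro y hy
      rw [lap_linear_comb (hnorm.contDiffAt (hU.mem_nhds hy)) (hureg.contDiffAt (hU.mem_nhds hy)),
        lap_norm_rpow _ hy, huharm y hy]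
      nlinarith [Real.rpow_pos_of_pos (norm_pos_iff.2 hy) (-1 - 2)]
    · intro y hy
      have := huhom.apply_le_div_norm (fun z hz => hmax hz) hy
      simp only [W, Real.rpow_neg_one]
      rw [div_eq_mul_inv] at this
      linarith
    · simp [W, M, mem_sphere_zero_iff_norm.1 hw₀]
  have := hW hx
  simp only [W, Real.rpow_neg_one, Pi.zero_apply] at this
  rw [div_eq_mul_inv]
  linarith

lemma nonpos_of_four_le (hn : 4 ≤ n) {x : Euc n} (hx : x ≠ 0) : u x ≤ 0 := by
  obtain ⟨w₀, hw₀, hmax⟩ := exists_isMaxOn_sphere (by omega) hureg.continuousOn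
  rcases le_or_gt (u w₀) 0 with hM | hM
  · exact (huhom.apply_le_div_norm (fun y hy => hmax hy) hx).trans
      (div_nonpos_of_nonpos_of_nonneg hM (norm_nonneg x))
  -- otherwise `u = u w₀ / ‖x‖`, which is not harmonic
  have hw₀0 : w₀ ≠ 0 := ne_zero_of_mem_sphere one_ne_zero ⟨w₀, hw₀⟩
  have hn' : (4 : ℝ) ≤ n := by exact_mod_cast hn
  have heq : u =ᶠ[𝓝 w₀] fun y => u w₀ * ‖y‖ ^ (-1 : ℝ) := by
    filter_upwards [isOpen_compl_singleton.mem_nhds hw₀0] with y hy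
    rw [eq_div_norm_of_isMaxOn_sphere hureg huharm huhom (by omega) hw₀ hmax (by nlinarith) hy,
      Real.rpow_neg_one, div_eq_mul_inv]
  have hnorm : ContDiffAt ℝ 2 (fun y : Euc n => ‖y‖ ^ (-1 : ℝ)) w₀ :=
    (contDiffAt_norm ℝ hw₀0).rpow_const_of_ne (norm_ne_zero_iff.2 hw₀0)
  have hlap := lap_linear_comb hnorm hnorm (u w₀) 0 0
  simp only [zero_mul, add_zero] at hlap
  rw [← heq.lap_eq, huharm w₀ hw₀0, lap_norm_rpow _ hw₀0, mem_sphere_zero_iff_norm.1 hw₀] at hlap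
  rw [Real.one_rpow] at hlap
  nlinarith

end HomogeneousHarmonic

theorem statement15_general (n : ℕ) (u : Euc n → ℝ)
    (hureg : ContDiffOn ℝ 2 u {x : Euc n | x ≠ 0})
    (huharm : ∀ x : Euc n, x ≠ 0 → lap u x = 0)
    (huhom : PosHomog (-1 : ℝ) u) :
    (4 ≤ n → ∀ x : Euc n, x ≠ 0 → u x = 0) ∧
      (n = 3 → ∃ c : ℝ, ∀ x : Euc n, x ≠ 0 → u x = c / ‖x‖) := by
  constructor
  · intro hn4 x hx
    have hneg := nonpos_of_four_le hureg.neg (fun y hy => by rw [lap_neg, huharm y hy, neg_zero])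
      huhom.neg hn4 hx
    exact le_antisymm (nonpos_of_four_le hureg huharm huhom hn4 hx) (neg_nonpos.1 hneg)
  · rintro rfl
    obtain ⟨w₀, hw₀, hmax⟩ := exists_isMaxOn_sphere (by norm_num) hureg.continuousOn
    exact ⟨u w₀, fun x hx =>
      eq_div_norm_of_isMaxOn_sphere hureg huharm huhom (by norm_num) hw₀ hmax (by norm_num) hx⟩

theorem statement15 (n : ℕ) (hn : 3 ≤ n) (u : Euc n → ℝ)
    (hureg : ContDiffOn ℝ 2 u {x : Euc n | x ≠ 0})
    (huharm : ∀ x : Euc n, x ≠ 0 → lap u x = 0)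
    (huhom : PosHomog (-1 : ℝ) u) :
    (4 ≤ n → ∀ x : Euc n, x ≠ 0 → u x = 0) ∧
      (n = 3 → ∃ c : ℝ, ∀ x : Euc n, x ≠ 0 → u x = c / ‖x‖) :=
  statement15_general n u hureg huharm huhom

end
end
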